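/- arXiv:2003.08528 — 5 statements merged into one kernel-verified Lean document; each statement's English description precedes it below -/
import Mathlib

section
/- Let G₁, G₂ be sub-σ-algebras of F and set φ(G₁,G₂) = sup{ |P(B|A) − P(B)| : A ∈ G₁, B ∈ G₂, P(A) > 0 }. For i = 1,2 let V_i be an X^{d_i}-valued G_i-measurable random variable with law μ_i; set d = d₁ + d₂, μ = μ₁ × μ₂, let ζ be the law of (V₁,V₂) and ν = (ζ + μ)/2. Then for every H ∈ L^∞(X^d, Borel, ν), the conditional expectation E[H(V₁,V₂) | G₁] exists, h(v) = E[H(v,V₂)] exists for μ₁-almost every v ∈ X^{d₁}, and P-almost surely |E[H(V₁,V₂) | G₁] − h(V₁)| ≤ 2 ‖H‖_{L^∞(ν)} φ(G₁,G₂). -/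
/-!
Fix `A ∈ 𝒢₁` and compare two measures on `X^{d₁} × X^{d₂}`: the law `δ` of `(V₁, V₂)` under
`P` restricted to `A`, and the product `η` of the law of `V₁` under `P` restricted to `A` with
the law of `V₂`. On a rectangle `B₁ × B₂`, with `A' = A ∩ {V₁ ∈ B₁} ∈ 𝒢₁`,
`|δ(B₁ × B₂) - η(B₁ × B₂)| = |P(A' ∩ {V₂ ∈ B₂}) - P(A') P(V₂ ∈ B₂)| ≤ φ P(A')`.
Summing over rectangles whose bases partition the first factor gives `|δ(S) - η(S)| ≤ φ P(A)` on
an algebra generating the product σ-algebra, hence for every measurable `S` by approximation.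
Since `δ` and `η` have the same mass and are absolutely continuous with respect to `ν`, the
layer-cake formula turns this into `|∫ H dδ - ∫ H dη| ≤ 2 ‖H‖_∞ φ P(A)`, i.e. into a bound on
`∫_A (H(V₁, V₂) - h(V₁)) dP`. A `𝒢₁`-measurable function whose integral over every `A ∈ 𝒢₁` is
at most `K P(A)` in absolute value is bounded by `K` almost surely.
-/

open MeasureTheory ProbabilityTheory Filter
open scoped ENNReal NNReal

/-- The φ-dependence coefficient between two sub-σ-algebras:
`φ(𝔊,ℌ) = sup{|P(B|A) − P(B)| : A ∈ 𝔊, B ∈ ℌ, P(A) > 0}`. -/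
noncomputable def phiDep {Ω : Type*} [MeasurableSpace Ω] (P : Measure Ω)
    (𝔊 ℌ : MeasurableSpace Ω) : ℝ :=
  sSup {x : ℝ | ∃ A B : Set Ω, MeasurableSet[𝔊] A ∧ MeasurableSet[ℌ] B ∧ 0 < P A ∧
    x = |(P (A ∩ B) / P A).toReal - (P B).toReal|}

open Set
open scoped symmDiff

lemma setOf_mem_comp_eq_iUnion {α β ι : Type*} (f : α → ι) (C : ι → Set β) :
    {z : α × β | z.2 ∈ C (f z.1)} = ⋃ i, (f ⁻¹' {i}) ×ˢ C i := by
  ext ⟨x, y⟩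
  simp

section GridSets

variable {Z₁ Z₂ : Type*} [MeasurableSpace Z₁] [MeasurableSpace Z₂]

/-- Finite unions of rectangles `(f ⁻¹' {i}) ×ˢ C i` whose bases partition `Z₁`; the partition is
given by the map `f` to a finite type. -/
def gridSets : Set (Set (Z₁ × Z₂)) :=
  {T | ∃ (ι : Type) (_ : Fintype ι) (f : Z₁ → ι) (C : ι → Set Z₂),
    (∀ i, MeasurableSet (f ⁻¹' {i})) ∧ (∀ i, MeasurableSet (C i)) ∧ T = {z | z.2 ∈ C (f z.1)}}

lemma prod_mem_gridSets {B₁ : Set Z₁} {B₂ : Set Z₂} (h₁ : MeasurableSet B₁)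
    (h₂ : MeasurableSet B₂) : B₁ ×ˢ B₂ ∈ gridSets := by
  classical
  refine ⟨Bool, inferInstance, fun x => decide (x ∈ B₁), fun b => if b then B₂ else ∅,
    ?_, ?_, ?_⟩
  · rintro (_ | _)
    · convert h₁.compl using 1; ext; simp
    · convert h₁ using 1; ext; simp
  · rintro (_ | _) <;> simp [h₂]
  · ext ⟨x, y⟩
    by_cases hx : x ∈ B₁ <;> simp [hx]

lemma isSetAlgebra_gridSets : IsSetAlgebra (gridSets : Set (Set (Z₁ × Z₂))) where
  empty_mem := by simpa using prod_mem_gridSets (Z₂ := Z₂) MeasurableSet.empty .empty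
  compl_mem := by
    rintro _ ⟨ι, _, f, C, hf, hC, rfl⟩
    exact ⟨ι, ‹_›, f, fun i => (C i)ᶜ, hf, fun i => (hC i).compl, rfl⟩
  union_mem := by
    rintro _ _ ⟨ι, _, f, C, hf, hC, rfl⟩ ⟨ι', _, f', C', hf', hC', rfl⟩
    refine ⟨ι × ι', inferInstance, fun x => (f x, f' x), fun p => C p.1 ∪ C' p.2,
      fun p => ?_, fun p => (hC p.1).union (hC' p.2), rfl⟩
    have : (fun x => (f x, f' x)) ⁻¹' {p} = f ⁻¹' {p.1} ∩ f' ⁻¹' {p.2} := by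
      ext x; simp [Prod.ext_iff]
    exact this ▸ (hf p.1).inter (hf' p.2)

lemma measurableSet_of_mem_gridSets {T : Set (Z₁ × Z₂)} (hT : T ∈ gridSets) :
    MeasurableSet T := by
  obtain ⟨ι, _, f, C, hf, hC, rfl⟩ := hT
  rw [setOf_mem_comp_eq_iUnion]
  exact .iUnion fun i => (hf i).prod (hC i)

lemma generateFrom_gridSets :
    MeasurableSpace.generateFrom (gridSets : Set (Set (Z₁ × Z₂))) = Prod.instMeasurableSpace := by
  refine le_antisymm (MeasurableSpace.generateFrom_le fun _ => measurableSet_of_mem_gridSets) ?_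
  rw [← generateFrom_prod]
  refine MeasurableSpace.generateFrom_mono ?_
  rintro _ ⟨B₁, h₁, B₂, h₂, rfl⟩
  exact prod_mem_gridSets h₁ h₂

variable {δ η : Measure (Z₁ × Z₂)} {κ : Measure Z₁} [IsFiniteMeasure δ] [IsFiniteMeasure η]
  [IsFiniteMeasure κ] {ε : ℝ}

lemma abs_measureReal_sub_le_of_mem_gridSets
    (hrect : ∀ B₁ B₂, MeasurableSet B₁ → MeasurableSet B₂ →
      |δ.real (B₁ ×ˢ B₂) - η.real (B₁ ×ˢ B₂)| ≤ ε * κ.real B₁)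
    {T : Set (Z₁ × Z₂)} (hT : T ∈ gridSets) :
    |δ.real T - η.real T| ≤ ε * κ.real univ := by
  obtain ⟨ι, _, f, C, hf, hC, rfl⟩ := hT
  have hdisj : Pairwise (Function.onFun Disjoint fun i => f ⁻¹' {i}) :=
    fun i j hij => (disjoint_singleton.mpr hij).preimage f
  have hdisj' : Pairwise (Function.onFun Disjoint fun i => (f ⁻¹' {i}) ×ˢ C i) :=
    fun i j hij => (hdisj hij).set_prod_left _ _
  rw [setOf_mem_comp_eq_iUnion, measureReal_iUnion_fintype hdisj' fun i => (hf i).prod (hC i),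
    measureReal_iUnion_fintype hdisj' fun i => (hf i).prod (hC i), ← Finset.sum_sub_distrib]
  have hκ : κ.real univ = ∑ i, κ.real (f ⁻¹' {i}) := by
    rw [← measureReal_iUnion_fintype hdisj hf]; congr; ext; simp
  rw [hκ, Finset.mul_sum]
  exact (Finset.abs_sum_le_sum_abs _ _).trans
    (Finset.sum_le_sum fun i _ => hrect _ _ (hf i) (hC i))

lemma abs_measureReal_sub_le_of_forall_prod
    (hrect : ∀ B₁ B₂, MeasurableSet B₁ → MeasurableSet B₂ →
      |δ.real (B₁ ×ˢ B₂) - η.real (B₁ ×ˢ B₂)| ≤ ε * κ.real B₁)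
    {S : Set (Z₁ × Z₂)} (hS : MeasurableSet S) :
    |δ.real S - η.real S| ≤ ε * κ.real univ := by
  refine le_of_forall_pos_le_add fun r hr => ?_
  obtain ⟨T, hT, hTS⟩ := exists_measure_symmDiff_lt_of_generateFrom_isSetRing (μ := δ + η)
    isSetAlgebra_gridSets.isSetRing
    ⟨{univ}, countable_singleton _, by simpa using isSetAlgebra_gridSets.univ_mem, by simp⟩
    generateFrom_gridSets.symm hS (ENNReal.ofReal_pos.mpr hr)
  have hTS' : δ.real (T ∆ S) + η.real (T ∆ S) < r := by
    rw [← measureReal_add_apply]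
    exact ENNReal.toReal_lt_of_lt_ofReal hTS
  have hT' := measurableSet_of_mem_gridSets hT
  calc |δ.real S - η.real S|
      ≤ |δ.real T - δ.real S| + |δ.real T - η.real T| + |η.real T - η.real S| := by
        rw [abs_sub_comm (δ.real T)]
        linarith [abs_sub_le (δ.real S) (δ.real T) (η.real S),
          abs_sub_le (δ.real T) (η.real T) (η.real S)]
    _ ≤ δ.real (T ∆ S) + ε * κ.real univ + η.real (T ∆ S) := by
        gcongr
        · exact abs_measureReal_sub_le_measureReal_symmDiff hT'.nullMeasurableSet
            hS.nullMeasurableSet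
        · exact abs_measureReal_sub_le_of_mem_gridSets hrect hT
        · exact abs_measureReal_sub_le_measureReal_symmDiff hT'.nullMeasurableSet
            hS.nullMeasurableSet
    _ ≤ ε * κ.real univ + r := by linarith

end GridSets

section LayerCake

variable {α : Type*} [MeasurableSpace α] {H : α → ℝ} {c : ℝ}

lemma integral_add_mul_measureReal_univ_eq_integral_Ioc (ρ : Measure α) [IsFiniteMeasure ρ]
    (hH : Measurable H) (hρ : ∀ᵐ z ∂ρ, |H z| ≤ c) :
    ∫ z, H z ∂ρ + c * ρ.real univ = ∫ t in Ioc 0 (2 * c), ρ.real {z | t ≤ H z + c} := by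
  have hint : Integrable H ρ :=
    .of_bound hH.aestronglyMeasurable c (by simpa only [Real.norm_eq_abs] using hρ)
  have hF : Integrable (fun z => H z + c) ρ := hint.add (integrable_const c)
  rw [← hF.integral_eq_integral_Ioc_meas_le, integral_add hint (integrable_const c),
    integral_const, smul_eq_mul, mul_comm]
  · filter_upwards [hρ] with z hz using by simp only [Pi.zero_apply]; linarith [neg_abs_le (H z)]
  · filter_upwards [hρ] with z hz using by linarith [le_abs_self (H z)]

lemma integrableOn_Ioc_measureReal_le_add (ρ : Measure α) [IsFiniteMeasure ρ] (a b : ℝ) :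
    IntegrableOn (fun t => ρ.real {z | t ≤ H z + c}) (Ioc a b) := by
  refine (AntitoneOn.integrableOn_isCompact isCompact_Icc ?_).mono_set Ioc_subset_Icc_self
  exact fun s _ t _ hst => measureReal_mono fun z hz => hst.trans hz

lemma abs_integral_sub_le_of_abs_measureReal_sub_le {δ η : Measure α}
    [IsFiniteMeasure δ] [IsFiniteMeasure η] (huniv : δ univ = η univ) {M : ℝ}
    (hM : ∀ S, MeasurableSet S → |δ.real S - η.real S| ≤ M) (hH : Measurable H) (hc : 0 ≤ c)
    (hδ : ∀ᵐ z ∂δ, |H z| ≤ c) (hη : ∀ᵐ z ∂η, |H z| ≤ c) :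
    |∫ z, H z ∂δ - ∫ z, H z ∂η| ≤ 2 * c * M := by
  have hdiff : ∫ z, H z ∂δ - ∫ z, H z ∂η =
      ∫ t in Ioc 0 (2 * c), (δ.real {z | t ≤ H z + c} - η.real {z | t ≤ H z + c}) := by
    rw [integral_sub (integrableOn_Ioc_measureReal_le_add δ _ _)
      (integrableOn_Ioc_measureReal_le_add η _ _),
      ← integral_add_mul_measureReal_univ_eq_integral_Ioc δ hH hδ,
      ← integral_add_mul_measureReal_univ_eq_integral_Ioc η hH hη, measureReal_def,
      measureReal_def, huniv]
    ring
  rw [hdiff, ← Real.norm_eq_abs]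
  refine (norm_setIntegral_le_of_norm_le_const measure_Ioc_lt_top fun t _ =>
    hM _ (measurableSet_le measurable_const (hH.add_const c))).trans_eq ?_
  rw [Real.volume_real_Ioc_of_le (by linarith)]
  ring

end LayerCake

section PhiDependence

variable {Ω : Type*} {𝒢₁ 𝒢₂ : MeasurableSpace Ω} [MeasurableSpace Ω] {P : Measure Ω}
  [IsProbabilityMeasure P]

lemma bddAbove_phiDep_set :
    BddAbove {x : ℝ | ∃ A B : Set Ω, MeasurableSet[𝒢₁] A ∧ MeasurableSet[𝒢₂] B ∧ 0 < P A ∧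
      x = |(P (A ∩ B) / P A).toReal - (P B).toReal|} := by
  refine ⟨1, ?_⟩
  rintro _ ⟨A, B, -, -, -, rfl⟩
  refine abs_sub_le_of_nonneg_of_le ENNReal.toReal_nonneg ?_ measureReal_nonneg measureReal_le_one
  refine ENNReal.toReal_le_of_le_ofReal zero_le_one ?_
  simpa using ENNReal.div_le_of_le_mul (by simpa using measure_mono inter_subset_left)

lemma abs_measureReal_inter_sub_mul_le_phiDep {A B : Set Ω} (hA : MeasurableSet[𝒢₁] A)
    (hB : MeasurableSet[𝒢₂] B) :
    |P.real (A ∩ B) - P.real A * P.real B| ≤ phiDep P 𝒢₁ 𝒢₂ * P.real A := by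
  rcases eq_or_ne (P A) 0 with hA0 | hA0
  · simp [measureReal_def, hA0, measure_mono_null inter_subset_left hA0]
  · have hApos : 0 < P.real A := ENNReal.toReal_pos hA0 (measure_ne_top _ _)
    have hle : |P.real (A ∩ B) / P.real A - P.real B| ≤ phiDep P 𝒢₁ 𝒢₂ :=
      le_csSup bddAbove_phiDep_set ⟨A, B, hA, hB, pos_iff_ne_zero.mpr hA0,
        by rw [ENNReal.toReal_div]; rfl⟩
    rwa [div_sub' hApos.ne', abs_div, abs_of_pos hApos, div_le_iff₀ hApos] at hle

end PhiDependence

section ConditionalExpectation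

variable {Ω : Type*} {m m0 : MeasurableSpace Ω} {P : Measure Ω} [IsFiniteMeasure P] {K : ℝ}

lemma ae_le_of_forall_setIntegral_le_mul (hm : m ≤ m0) {f : Ω → ℝ} (hf : Integrable f P)
    (hfm : StronglyMeasurable[m] f)
    (h : ∀ s, MeasurableSet[m] s → ∫ x in s, f x ∂P ≤ K * P.real s) :
    ∀ᵐ x ∂P, f x ≤ K := by
  refine ae_of_ae_trim hm (ae_le_of_forall_setIntegral_le (hf.trim hm hfm) (integrable_const K)
    fun s hs _ => ?_)
  rw [← setIntegral_trim hm hfm hs, setIntegral_const, smul_eq_mul, mul_comm, measureReal_def,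
    trim_measurableSet_eq hm hs]
  exact h s hs

lemma ae_abs_le_of_forall_abs_setIntegral_le_mul (hm : m ≤ m0) {f : Ω → ℝ} (hf : Integrable f P)
    (hfm : StronglyMeasurable[m] f)
    (h : ∀ s, MeasurableSet[m] s → |∫ x in s, f x ∂P| ≤ K * P.real s) :
    ∀ᵐ x ∂P, |f x| ≤ K := by
  have hle := ae_le_of_forall_setIntegral_le_mul hm hf hfm fun s hs => (abs_le.mp (h s hs)).2
  have hge := ae_le_of_forall_setIntegral_le_mul hm hf.neg hfm.neg fun s hs => by
    simpa [integral_neg] using neg_le.mp (abs_le.mp (h s hs)).1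
  filter_upwards [hle, hge] with x hx hx' using abs_le.mpr ⟨neg_le.mp hx', hx⟩

lemma ae_abs_condExp_sub_le_of_forall_abs_setIntegral_sub_le (hm : m ≤ m0) {Y W : Ω → ℝ}
    (hY : Integrable Y P) (hW : Integrable W P) (hWm : StronglyMeasurable[m] W)
    (h : ∀ s, MeasurableSet[m] s → |∫ x in s, Y x ∂P - ∫ x in s, W x ∂P| ≤ K * P.real s) :
    ∀ᵐ x ∂P, |P[Y|m] x - W x| ≤ K := by
  refine ae_abs_le_of_forall_abs_setIntegral_le_mul hm (integrable_condExp.sub hW)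
    (stronglyMeasurable_condExp.sub hWm) fun s hs => ?_
  rw [integral_sub integrable_condExp.integrableOn hW.integrableOn, setIntegral_condExp hm hY hs]
  exact h s hs

end ConditionalExpectation

section Coupling

variable {Ω Z₁ Z₂ : Type*} [MeasurableSpace Z₁] [MeasurableSpace Z₂]
  {𝒢₁ 𝒢₂ : MeasurableSpace Ω} [m0 : MeasurableSpace Ω] {P : Measure Ω} [IsProbabilityMeasure P]
  {V₁ : Ω → Z₁} {V₂ : Ω → Z₂} {H : Z₁ × Z₂ → ℝ} {C : ℝ}

lemma integrable_comp_of_ae_abs_le {α : Type*} [MeasurableSpace α] {f : Ω → α} {G : α → ℝ}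
    (hf : Measurable f) (hG : Measurable G) (h : ∀ᵐ z ∂(Measure.map f P), |G z| ≤ C) :
    Integrable (fun ω => G (f ω)) P :=
  .of_bound (hG.comp hf).aestronglyMeasurable C
    (by simpa only [Real.norm_eq_abs] using ae_of_ae_map hf.aemeasurable h)

lemma stronglyMeasurable_integral_comp_prodMk (hV₂ : Measurable V₂) (hH : Measurable H) :
    StronglyMeasurable fun v => ∫ ω, H (v, V₂ ω) ∂P :=
  (hH.comp (measurable_fst.prodMk (hV₂.comp measurable_snd))).stronglyMeasurable
    |>.integral_prod_right'

lemma abs_measureReal_map_restrict_sub_le_phiDep (h𝒢₁ : 𝒢₁ ≤ m0) (h𝒢₂ : 𝒢₂ ≤ m0)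
    (hV₁ : Measurable[𝒢₁] V₁) (hV₂ : Measurable[𝒢₂] V₂) {A : Set Ω} (hA : MeasurableSet[𝒢₁] A)
    {S : Set (Z₁ × Z₂)} (hS : MeasurableSet S) :
    |(Measure.map (fun ω => (V₁ ω, V₂ ω)) (P.restrict A)).real S
        - ((Measure.map V₁ (P.restrict A)).prod (Measure.map V₂ P)).real S|
      ≤ phiDep P 𝒢₁ 𝒢₂ * P.real A := by
  have hV₁m : Measurable V₁ := hV₁.mono h𝒢₁ le_rfl
  have hV₂m : Measurable V₂ := hV₂.mono h𝒢₂ le_rfl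
  have hκ : ∀ B₁, MeasurableSet B₁ →
      (Measure.map V₁ (P.restrict A)).real B₁ = P.real (V₁ ⁻¹' B₁ ∩ A) := fun B₁ h => by
    rw [map_measureReal_apply hV₁m h, measureReal_restrict_apply (hV₁m h)]
  have hrect : ∀ B₁ B₂, MeasurableSet B₁ → MeasurableSet B₂ →
      |(Measure.map (fun ω => (V₁ ω, V₂ ω)) (P.restrict A)).real (B₁ ×ˢ B₂)
        - ((Measure.map V₁ (P.restrict A)).prod (Measure.map V₂ P)).real (B₁ ×ˢ B₂)|
      ≤ phiDep P 𝒢₁ 𝒢₂ * (Measure.map V₁ (P.restrict A)).real B₁ := fun B₁ B₂ h₁ h₂ => by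
    rw [map_measureReal_apply (hV₁m.prodMk hV₂m) (h₁.prod h₂), mk_preimage_prod,
      measureReal_restrict_apply ((hV₁m h₁).inter (hV₂m h₂)), measureReal_prod_prod, hκ _ h₁,
      map_measureReal_apply hV₂m h₂, inter_right_comm]
    exact abs_measureReal_inter_sub_mul_le_phiDep ((hV₁ h₁).inter hA) (hV₂ h₂)
  simpa [hκ _ .univ] using abs_measureReal_sub_le_of_forall_prod hrect hS

lemma abs_setIntegral_sub_setIntegral_le_phiDep (h𝒢₁ : 𝒢₁ ≤ m0) (h𝒢₂ : 𝒢₂ ≤ m0)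
    (hV₁ : Measurable[𝒢₁] V₁) (hV₂ : Measurable[𝒢₂] V₂) (hH : Measurable H) (hC : 0 ≤ C)
    (hζ : ∀ᵐ z ∂(Measure.map (fun ω => (V₁ ω, V₂ ω)) P), |H z| ≤ C)
    (hμ : ∀ᵐ z ∂((Measure.map V₁ P).prod (Measure.map V₂ P)), |H z| ≤ C)
    {A : Set Ω} (hA : MeasurableSet[𝒢₁] A) :
    |∫ ω in A, H (V₁ ω, V₂ ω) ∂P - ∫ ω in A, ∫ ω', H (V₁ ω, V₂ ω') ∂P ∂P|
      ≤ 2 * C * phiDep P 𝒢₁ 𝒢₂ * P.real A := by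
  have hV₁m : Measurable V₁ := hV₁.mono h𝒢₁ le_rfl
  have hV₂m : Measurable V₂ := hV₂.mono h𝒢₂ le_rfl
  have hVm : Measurable fun ω => (V₁ ω, V₂ ω) := hV₁m.prodMk hV₂m
  set δ := Measure.map (fun ω => (V₁ ω, V₂ ω)) (P.restrict A)
  set η := (Measure.map V₁ (P.restrict A)).prod (Measure.map V₂ P)
  have hδ : ∀ᵐ z ∂δ, |H z| ≤ C :=
    (Measure.absolutelyContinuous_of_le (Measure.map_mono Measure.restrict_le_self hVm)).ae_le hζ
  have hη : ∀ᵐ z ∂η, |H z| ≤ C :=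
    ((Measure.absolutelyContinuous_of_le (Measure.map_mono Measure.restrict_le_self hV₁m)).prod
      .rfl).ae_le hμ
  have huniv : δ univ = η univ := by
    simp only [δ, η]
    rw [Measure.map_apply hVm .univ, ← univ_prod_univ, Measure.prod_prod,
      Measure.map_apply hV₁m .univ, Measure.map_apply hV₂m .univ]
    simp
  have hδH : ∫ ω in A, H (V₁ ω, V₂ ω) ∂P = ∫ z, H z ∂δ :=
    (integral_map hVm.aemeasurable hH.aestronglyMeasurable).symm
  have hηH : ∫ ω in A, ∫ ω', H (V₁ ω, V₂ ω') ∂P ∂P = ∫ z, H z ∂η := by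
    have hinner : ∀ v, ∫ y, H (v, y) ∂(Measure.map V₂ P) = ∫ ω', H (v, V₂ ω') ∂P := fun v =>
      integral_map hV₂m.aemeasurable (hH.comp measurable_prodMk_left).aestronglyMeasurable
    rw [integral_prod _ (.of_bound hH.aestronglyMeasurable C
      (by simpa only [Real.norm_eq_abs] using hη))]
    simp only [hinner]
    exact (integral_map hV₁m.aemeasurable
      (stronglyMeasurable_integral_comp_prodMk hV₂m hH).aestronglyMeasurable).symm
  rw [hδH, hηH, mul_assoc]
  exact abs_integral_sub_le_of_abs_measureReal_sub_le huniv
    (fun S hS => abs_measureReal_map_restrict_sub_le_phiDep h𝒢₁ h𝒢₂ hV₁ hV₂ hA hS) hH hC hδ hη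

theorem ae_abs_condExp_sub_integral_le_phiDep (h𝒢₁ : 𝒢₁ ≤ m0) (h𝒢₂ : 𝒢₂ ≤ m0)
    (hV₁ : Measurable[𝒢₁] V₁) (hV₂ : Measurable[𝒢₂] V₂) (hH : Measurable H) (hC : 0 ≤ C)
    (hζ : ∀ᵐ z ∂(Measure.map (fun ω => (V₁ ω, V₂ ω)) P), |H z| ≤ C)
    (hμ : ∀ᵐ z ∂((Measure.map V₁ P).prod (Measure.map V₂ P)), |H z| ≤ C) :
    ∀ᵐ ω ∂P, |(P[fun ω' => H (V₁ ω', V₂ ω')|𝒢₁]) ω - ∫ ω', H (V₁ ω, V₂ ω') ∂P|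
      ≤ 2 * C * phiDep P 𝒢₁ 𝒢₂ := by
  have hV₁m : Measurable V₁ := hV₁.mono h𝒢₁ le_rfl
  have hV₂m : Measurable V₂ := hV₂.mono h𝒢₂ le_rfl
  have hgm := stronglyMeasurable_integral_comp_prodMk (P := P) hV₂m hH
  have hg : ∀ᵐ v ∂(Measure.map V₁ P), |∫ ω', H (v, V₂ ω') ∂P| ≤ C := by
    filter_upwards [Measure.ae_ae_of_ae_prod hμ] with v hv
    have := norm_integral_le_of_norm_le_const (f := fun ω' => H (v, V₂ ω'))
      (by simpa only [Real.norm_eq_abs] using ae_of_ae_map hV₂m.aemeasurable hv)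
    rwa [probReal_univ, mul_one, Real.norm_eq_abs] at this
  exact ae_abs_condExp_sub_le_of_forall_abs_setIntegral_sub_le h𝒢₁
    (integrable_comp_of_ae_abs_le (hV₁m.prodMk hV₂m) hH hζ)
    (integrable_comp_of_ae_abs_le (G := fun v => ∫ ω', H (v, V₂ ω') ∂P) hV₁m hgm.measurable hg)
    (hgm.comp_measurable hV₁)
    fun A hA => abs_setIntegral_sub_setIntegral_le_phiDep h𝒢₁ h𝒢₂ hV₁ hV₂ hH hC hζ hμ hA

end Coupling

theorem statement0_general
    {Ω : Type*} (𝒢₁ 𝒢₂ : MeasurableSpace Ω) [m0 : MeasurableSpace Ω]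
    (P : Measure Ω) [IsProbabilityMeasure P]
    {𝓧 : Type*} [MeasurableSpace 𝓧]
    (d₁ d₂ : ℕ) (h𝒢₁ : 𝒢₁ ≤ m0) (h𝒢₂ : 𝒢₂ ≤ m0)
    (V₁ : Ω → Fin d₁ → 𝓧) (V₂ : Ω → Fin d₂ → 𝓧)
    (hV₁ : Measurable[𝒢₁] V₁) (hV₂ : Measurable[𝒢₂] V₂)
    (H : (Fin d₁ → 𝓧) × (Fin d₂ → 𝓧) → ℝ) (hHmeas : Measurable H)
    (hHbdd : MemLp H ⊤ ((2 : ℝ≥0∞)⁻¹ • (Measure.map (fun ω => (V₁ ω, V₂ ω)) P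
      + (Measure.map V₁ P).prod (Measure.map V₂ P)))) :
    Integrable (fun ω => H (V₁ ω, V₂ ω)) P ∧
    (∀ᵐ v ∂(Measure.map V₁ P), Integrable (fun ω => H (v, V₂ ω)) P) ∧
    ∀ᵐ ω ∂P,
      |(P[fun ω' => H (V₁ ω', V₂ ω')|𝒢₁]) ω - ∫ ω', H (V₁ ω, V₂ ω') ∂P|
        ≤ 2 * (eLpNorm H ⊤ ((2 : ℝ≥0∞)⁻¹ • (Measure.map (fun ω => (V₁ ω, V₂ ω)) P
            + (Measure.map V₁ P).prod (Measure.map V₂ P)))).toReal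
          * phiDep P 𝒢₁ 𝒢₂ := by
  have hV₁m : Measurable V₁ := hV₁.mono h𝒢₁ le_rfl
  have hV₂m : Measurable V₂ := hV₂.mono h𝒢₂ le_rfl
  have hν := ae_le_lpNorm_exponent_top hHbdd
  rw [← toReal_eLpNorm hHbdd.aestronglyMeasurable] at hν
  obtain ⟨hζ, hμ⟩ := ae_add_measure_iff.mp ((Measure.ae_ennreal_smul_measure_iff (by simp)).mp hν)
  simp only [Real.norm_eq_abs] at hζ hμ
  refine ⟨integrable_comp_of_ae_abs_le (hV₁m.prodMk hV₂m) hHmeas hζ, ?_,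
    ae_abs_condExp_sub_integral_le_phiDep h𝒢₁ h𝒢₂ hV₁ hV₂ hHmeas ENNReal.toReal_nonneg hζ hμ⟩
  filter_upwards [Measure.ae_ae_of_ae_prod hμ] with v hv
  exact integrable_comp_of_ae_abs_le (G := fun y => H (v, y)) hV₂m
    (hHmeas.comp measurable_prodMk_left) hv

/-- for `H ∈ L^∞(X^d, Borel, ν)` with `ν = (ζ + μ₁ × μ₂)/2`, the conditional
expectation `E[H(V₁,V₂)|𝒢₁]` exists (i.e. `H(V₁,V₂)` is integrable), `h(v) = E[H(v,V₂)]` exists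
for `μ₁`-a.e. `v`, and a.s. `|E[H(V₁,V₂)|𝒢₁] − h(V₁)| ≤ 2‖H‖_{L^∞(ν)} φ(𝒢₁,𝒢₂)`. -/
theorem statement0
    {Ω : Type*} (𝒢₁ 𝒢₂ : MeasurableSpace Ω) [m0 : MeasurableSpace Ω]
    (P : Measure Ω) [IsProbabilityMeasure P]
    {𝓧 : Type*} [MetricSpace 𝓧] [MeasurableSpace 𝓧] [BorelSpace 𝓧]
    (d₁ d₂ : ℕ) (h𝒢₁ : 𝒢₁ ≤ m0) (h𝒢₂ : 𝒢₂ ≤ m0)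
    (V₁ : Ω → Fin d₁ → 𝓧) (V₂ : Ω → Fin d₂ → 𝓧)
    (hV₁ : Measurable[𝒢₁] V₁) (hV₂ : Measurable[𝒢₂] V₂)
    (H : (Fin d₁ → 𝓧) × (Fin d₂ → 𝓧) → ℝ) (hHmeas : Measurable H)
    (hHbdd : MemLp H ⊤ ((2 : ℝ≥0∞)⁻¹ • (Measure.map (fun ω => (V₁ ω, V₂ ω)) P
      + (Measure.map V₁ P).prod (Measure.map V₂ P)))) :
    Integrable (fun ω => H (V₁ ω, V₂ ω)) P ∧
    (∀ᵐ v ∂(Measure.map V₁ P), Integrable (fun ω => H (v, V₂ ω)) P) ∧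
    ∀ᵐ ω ∂P,
      |(P[fun ω' => H (V₁ ω', V₂ ω')|𝒢₁]) ω - ∫ ω', H (V₁ ω, V₂ ω') ∂P|
        ≤ 2 * (eLpNorm H ⊤ ((2 : ℝ≥0∞)⁻¹ • (Measure.map (fun ω => (V₁ ω, V₂ ω)) P
            + (Measure.map V₁ P).prod (Measure.map V₂ P)))).toReal
          * phiDep P 𝒢₁ 𝒢₂ :=
  statement0_general 𝒢₁ 𝒢₂ (m0 := m0) P d₁ d₂ h𝒢₁ h𝒢₂ V₁ V₂ hV₁ hV₂ H hHmeas hHbdd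
end

section
/- Let k₀ ∈ ℕ and let U₁,...,U_{k₀} be random variables, U_i taking values in X^{d_i}, such that U_i is F_{m_i,n_i}-measurable where n_{i−1} < m_i ≤ n_i < m_{i+1} for i = 1,...,k₀ (with n₀ = −∞ and m_{k₀+1} = ∞). Let {C_j : 1 ≤ j ≤ s} be a partition of {1,...,k₀}, let U(C_j) = {U_i : i ∈ C_j}, and let U^{(j)}(C_j) = {U_i^{(j)} : i ∈ C_j}, j = 1,...,s, be mutually independent copies of the U(C_j)'s; for each i let a_i be the unique index with i ∈ C_{a_i}. Then for every bounded Borel function H : X^{d₁+···+d_{k₀}} → ℝ, |E[H(U₁,...,U_{k₀})] − E[H(U₁^{(a₁)},...,U_{k₀}^{(a_{k₀})})]| ≤ 4 sup|H| · Σ_{i=2}^{k₀} φ(m_i − n_{i−1}). -/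
open MeasureTheory ProbabilityTheory Filter
open scoped ENNReal NNReal

/-- The φ-mixing coefficients of a family of σ-algebras `F n m`:
`φ(n) = sup_k φ(F_{−∞,k}, F_{k+n,∞})`. -/
noncomputable def mixPhi {Ω : Type*} [MeasurableSpace Ω] (P : Measure Ω)
    (F : ℤ → ℤ → MeasurableSpace Ω) (n : ℕ) : ℝ :=
  ⨆ k : ℤ, phiDep P (⨆ j : {j : ℤ // j ≤ k}, F j.1 k)
    (⨆ m : {m : ℤ // k + (n : ℤ) ≤ m}, F (k + (n : ℤ)) m.1)

/-!
Let `μ` be the joint law of `(U₁, …, U_{k₀})`, `μ'` that of the block copies and `π` the product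
of the marginal laws. Both `μ` and `μ'` are within `∑ᵢ φ(m_{i+1} - n_i)` of `π` setwise, and for
laws that are `c`-close setwise, integrals of `H` differ by at most `2 sup|H| c` (layer cake);
this gives the factor `4`.

For `μ` versus `π`, peel off the first variable: the joint law of `(U₁, (U_j)_{j>1})` is setwise
within `φ(σ(U₁), σ(U_j : j > 1))` of the product of its marginals. On a finite union of rectangles
`⋃ Aₜ × Bₜ` with disjoint bases this is `|∑ P(Aₜ ∩ Bₜ) - P(Aₜ) P(Bₜ)| ≤ φ ∑ P(Aₜ) ≤ φ`; these sets
form a ring generating the product σ-algebra, so the bound extends by approximation. Induction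
on the number of variables finishes. For `μ'`, the same bound holds inside each block, and
setwise distances add up over the independent product of the blocks.
-/

open scoped symmDiff

section PhiDep

-- `mΩ` is declared after `𝔊 ℌ 𝔊' ℌ'` so that instance resolution picks it for `Ω`.
variable {Ω : Type*} {𝔊 ℌ 𝔊' ℌ' : MeasurableSpace Ω} [mΩ : MeasurableSpace Ω] (P : Measure Ω)
  [IsProbabilityMeasure P]

lemma abs_toReal_measure_inter_div_sub_le_one (A B : Set Ω) :
    |(P (A ∩ B) / P A).toReal - (P B).toReal| ≤ 1 := by
  have hcond : (P (A ∩ B) / P A).toReal ≤ 1 :=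
    ENNReal.toReal_le_of_le_ofReal zero_le_one <| by
      simpa using ENNReal.div_le_of_le_mul (by simpa using measure_mono Set.inter_subset_left)
  have hB : (P B).toReal ≤ 1 := measureReal_le_one
  rw [abs_sub_le_iff]
  constructor <;> linarith [ENNReal.toReal_nonneg (a := P (A ∩ B) / P A),
    ENNReal.toReal_nonneg (a := P B)]

lemma le_phiDep {A B : Set Ω} (hA : MeasurableSet[𝔊] A) (hB : MeasurableSet[ℌ] B)
    (hPA : 0 < P A) : |(P (A ∩ B) / P A).toReal - (P B).toReal| ≤ phiDep P 𝔊 ℌ :=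
  le_csSup ⟨1, fun _ ⟨A, B, _, _, _, hx⟩ => hx ▸ abs_toReal_measure_inter_div_sub_le_one P A B⟩
    ⟨A, B, hA, hB, hPA, rfl⟩

lemma phiDep_le {c : ℝ} (h : ∀ A B, MeasurableSet[𝔊] A → MeasurableSet[ℌ] B → 0 < P A →
      |(P (A ∩ B) / P A).toReal - (P B).toReal| ≤ c) :
    phiDep P 𝔊 ℌ ≤ c :=
  csSup_le ⟨_, _, _, MeasurableSet.univ, MeasurableSet.univ, by simp, rfl⟩
    fun _ ⟨A, B, hA, hB, hPA, hx⟩ => hx ▸ h A B hA hB hPA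

lemma phiDep_nonneg : 0 ≤ phiDep P 𝔊 ℌ :=
  (abs_nonneg _).trans (le_phiDep P MeasurableSet.univ MeasurableSet.univ (by simp))

lemma phiDep_le_one : phiDep P 𝔊 ℌ ≤ 1 :=
  phiDep_le P fun A B _ _ _ => abs_toReal_measure_inter_div_sub_le_one P A B

lemma phiDep_mono (h𝔊 : 𝔊 ≤ 𝔊') (hℌ : ℌ ≤ ℌ') : phiDep P 𝔊 ℌ ≤ phiDep P 𝔊' ℌ' :=
  phiDep_le P fun _ _ hA hB hPA => le_phiDep P (h𝔊 _ hA) (hℌ _ hB) hPA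

lemma phiDep_bot_right : phiDep P 𝔊 ⊥ = 0 := by
  refine le_antisymm (phiDep_le P fun A B _ hB hPA => ?_) (phiDep_nonneg P)
  rcases MeasurableSpace.measurableSet_bot_iff.1 hB with rfl | rfl
  · simp
  · simp [ENNReal.div_self hPA.ne' (measure_ne_top P A)]

lemma abs_measureReal_inter_sub_mul_le {A B : Set Ω} (hA : MeasurableSet[𝔊] A)
    (hB : MeasurableSet[ℌ] B) :
    |P.real (A ∩ B) - P.real A * P.real B| ≤ phiDep P 𝔊 ℌ * P.real A := by
  rcases eq_zero_or_pos (P A) with hA0 | hApos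
  · have hAB : P (A ∩ B) = 0 := measure_mono_null Set.inter_subset_left hA0
    simp [Measure.real, hAB, hA0]
  have hA_real : 0 < P.real A := ENNReal.toReal_pos hApos.ne' (measure_ne_top P A)
  have hcond := le_phiDep P hA hB hApos
  rw [ENNReal.toReal_div] at hcond
  calc |P.real (A ∩ B) - P.real A * P.real B|
      = P.real A * |P.real (A ∩ B) / P.real A - P.real B| := by
        rw [← abs_of_pos hA_real, ← abs_mul, abs_of_pos hA_real, mul_sub,
          mul_div_cancel₀ _ hA_real.ne']
    _ ≤ phiDep P 𝔊 ℌ * P.real A := by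
        rw [mul_comm]; exact mul_le_mul_of_nonneg_right hcond hA_real.le

end PhiDep

section MixPhi

variable {Ω : Type*} [MeasurableSpace Ω] (P : Measure Ω) [IsProbabilityMeasure P]
  (F : ℤ → ℤ → MeasurableSpace Ω)

lemma phiDep_le_mixPhi {k l : ℤ} (hkl : k ≤ l) :
    phiDep P (⨆ j : {j : ℤ // j ≤ k}, F j.1 k) (⨆ m : {m : ℤ // l ≤ m}, F l m.1)
      ≤ mixPhi P F (l - k).toNat := by
  obtain ⟨g, rfl⟩ : ∃ g : ℕ, l = k + g := ⟨(l - k).toNat, by omega⟩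
  rw [show (k + g - k).toNat = g by omega]
  exact le_ciSup (f := fun k : ℤ => phiDep P (⨆ j : {j : ℤ // j ≤ k}, F j.1 k)
    (⨆ m : {m : ℤ // k + (g : ℤ) ≤ m}, F (k + (g : ℤ)) m.1))
    ⟨1, by rintro _ ⟨k', rfl⟩; exact phiDep_le_one P⟩ k

end MixPhi

section TVLe

variable {γ δ : Type*} [MeasurableSpace γ] [MeasurableSpace δ]

def TVLe (μ ν : Measure γ) (c : ℝ) : Prop :=
  ∀ s, MeasurableSet s → |μ.real s - ν.real s| ≤ c

namespace TVLe

variable {μ ν ρ : Measure γ} {c c' : ℝ}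

lemma symm (h : TVLe μ ν c) : TVLe ν μ c := fun s hs => by
  rw [abs_sub_comm]; exact h s hs

lemma mono (h : TVLe μ ν c) (hcc' : c ≤ c') : TVLe μ ν c' :=
  fun s hs => (h s hs).trans hcc'

lemma trans (h₁ : TVLe μ ρ c) (h₂ : TVLe ρ ν c') : TVLe μ ν (c + c') :=
  fun s hs => (abs_sub_le _ _ _).trans (add_le_add (h₁ s hs) (h₂ s hs))

lemma map (h : TVLe μ ν c) {f : γ → δ} (hf : Measurable f) :
    TVLe (μ.map f) (ν.map f) c := fun s hs => by
  rw [map_measureReal_apply hf hs, map_measureReal_apply hf hs]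
  exact h _ (hf hs)

lemma of_map_measurableEquiv (e : γ ≃ᵐ δ) (h : TVLe (μ.map e) (ν.map e) c) : TVLe μ ν c := by
  simpa only [MeasurableEquiv.map_symm_map] using h.map e.symm.measurable

lemma of_subsingleton [Subsingleton γ] [IsProbabilityMeasure μ] [IsProbabilityMeasure ν] :
    TVLe μ ν 0 := by
  intro s _
  rcases s.eq_empty_or_nonempty with rfl | ⟨x, hx⟩
  · simp
  · rw [show s = Set.univ from Set.eq_univ_of_forall fun y => Subsingleton.elim x y ▸ hx]
    simp

lemma prod_left (ρ : Measure δ) [IsProbabilityMeasure ρ] [IsFiniteMeasure μ] [IsFiniteMeasure ν]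
    (h : TVLe μ ν c) : TVLe (ρ.prod μ) (ρ.prod ν) c := by
  intro s hs
  have hslice : ∀ (κ : Measure γ) [IsFiniteMeasure κ],
      (ρ.prod κ).real s = ∫ x, κ.real (Prod.mk x ⁻¹' s) ∂ρ ∧
        Integrable (fun x => κ.real (Prod.mk x ⁻¹' s)) ρ := by
    intro κ _
    have hmeas := measurable_measure_prodMk_left (ν := κ) hs
    refine ⟨?_, .of_bound hmeas.ennreal_toReal.aestronglyMeasurable (κ.real Set.univ)
      (ae_of_all _ fun x => ?_)⟩
    · rw [measureReal_def, Measure.prod_apply hs,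
        ← integral_toReal hmeas.aemeasurable (ae_of_all _ fun _ => measure_lt_top _ _)]
      rfl
    · rw [Real.norm_of_nonneg measureReal_nonneg]
      exact measureReal_mono (Set.subset_univ _)
  obtain ⟨hμ, hμint⟩ := hslice μ
  obtain ⟨hν, hνint⟩ := hslice ν
  rw [hμ, hν, ← integral_sub hμint hνint, ← Real.norm_eq_abs]
  refine (norm_integral_le_of_norm_le_const
    (ae_of_all _ fun x => h _ (measurable_prodMk_left hs))).trans_eq ?_
  simp

lemma prod_right (ρ : Measure δ) [IsProbabilityMeasure ρ] [IsFiniteMeasure μ]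
    [IsFiniteMeasure ν] (h : TVLe μ ν c) : TVLe (μ.prod ρ) (ν.prod ρ) c := by
  rw [← Measure.prod_swap (μ := ρ) (ν := μ), ← Measure.prod_swap (μ := ρ) (ν := ν)]
  exact (h.prod_left ρ).map measurable_swap

lemma pi {n : ℕ} {E : Fin n → Type*} [∀ i, MeasurableSpace (E i)] {μ ν : ∀ i, Measure (E i)}
    [∀ i, IsProbabilityMeasure (μ i)] [∀ i, IsProbabilityMeasure (ν i)] {c : Fin n → ℝ}
    (h : ∀ i, TVLe (μ i) (ν i) (c i)) :
    TVLe (Measure.pi μ) (Measure.pi ν) (∑ i, c i) := by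
  induction n with
  | zero => simpa using of_subsingleton
  | succ n ih =>
    refine of_map_measurableEquiv (MeasurableEquiv.piFinSuccAbove E 0) ?_
    rw [(measurePreserving_piFinSuccAbove μ 0).map_eq,
      (measurePreserving_piFinSuccAbove ν 0).map_eq, Fin.sum_univ_succ, add_comm (c 0)]
    exact ((ih fun j => h _).prod_left (μ 0)).trans ((h 0).prod_right _)

variable [IsProbabilityMeasure μ] [IsProbabilityMeasure ν] {M : ℝ} {f : γ → ℝ}

lemma abs_integral_sub_le_of_nonneg (h : TVLe μ ν c) (hf : Measurable f) (hM : 0 ≤ M)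
    (hf0 : ∀ x, 0 ≤ f x) (hfM : ∀ x, f x ≤ M) :
    |∫ x, f x ∂μ - ∫ x, f x ∂ν| ≤ M * c := by
  have hlayer : ∀ (κ : Measure γ) [IsProbabilityMeasure κ],
      ∫ x, f x ∂κ = ∫ t in Set.Ioc 0 M, κ.real {x | t ≤ f x} ∧
        IntegrableOn (fun t => κ.real {x | t ≤ f x}) (Set.Ioc 0 M) := by
    intro κ _
    refine ⟨(Integrable.of_bound hf.aestronglyMeasurable M (ae_of_all _ fun x => ?_))
      |>.integral_eq_integral_Ioc_meas_le (ae_of_all _ hf0) (ae_of_all _ hfM), ?_⟩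
    · rw [Real.norm_of_nonneg (hf0 x)]; exact hfM x
    · refine (AntitoneOn.integrableOn_isCompact isCompact_Icc fun s _ t _ hst => ?_).mono_set
        Set.Ioc_subset_Icc_self
      exact measureReal_mono fun x hx => hst.trans hx
  obtain ⟨hμ, hμi⟩ := hlayer μ
  obtain ⟨hν, hνi⟩ := hlayer ν
  rw [hμ, hν, ← integral_sub hμi hνi, ← Real.norm_eq_abs]
  refine (norm_setIntegral_le_of_norm_le_const measure_Ioc_lt_top
    fun t _ => h _ (measurableSet_le measurable_const hf)).trans_eq ?_
  rw [Real.volume_real_Ioc_of_le hM, sub_zero, mul_comm]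

lemma abs_integral_sub_le (h : TVLe μ ν c) (hf : Measurable f) (hM : 0 ≤ M)
    (hfM : ∀ x, |f x| ≤ M) :
    |∫ x, f x ∂μ - ∫ x, f x ∂ν| ≤ 2 * M * c := by
  have hshift := h.abs_integral_sub_le_of_nonneg (f := fun x => f x + M) (M := 2 * M)
    (hf.add_const M)
    (by linarith) (fun x => by linarith [(abs_le.1 (hfM x)).1])
    (fun x => by linarith [(abs_le.1 (hfM x)).2])
  have hint : ∀ (κ : Measure γ) [IsProbabilityMeasure κ], Integrable f κ := fun κ _ =>
    .of_bound hf.aestronglyMeasurable M (ae_of_all _ hfM)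
  simpa [integral_add (hint μ) (integrable_const M), integral_add (hint ν) (integrable_const M)]
    using hshift

end TVLe

end TVLe

lemma abs_measureReal_sub_le_measureReal_symmDiff {γ : Type*} [MeasurableSpace γ]
    (μ : Measure γ) [IsFiniteMeasure μ] (s t : Set γ) :
    |μ.real s - μ.real t| ≤ μ.real (s ∆ t) := by
  have hs : μ.real s ≤ μ.real (s ∆ t) + μ.real t :=
    (measureReal_mono (le_symmDiff_sup_right s t)).trans (measureReal_union_le _ _)
  have ht : μ.real t ≤ μ.real (s ∆ t) + μ.real s :=
    (measureReal_mono (le_symmDiff_sup_left s t)).trans (measureReal_union_le _ _)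
  rw [abs_sub_le_iff]
  constructor <;> linarith

section StripSets

variable {α β : Type*} [MeasurableSpace α]

/-- The sets `{(x, y) | y ∈ g x}` with `g` a simple function whose values are measurable sets,
i.e. the finite unions of measurable rectangles with pairwise disjoint bases. -/
def stripSets (α β : Type*) [MeasurableSpace α] [MeasurableSpace β] : Set (Set (α × β)) :=
  {S | ∃ g : SimpleFunc α (Set β), (∀ x, MeasurableSet (g x)) ∧ S = {p | p.2 ∈ g p.1}}

lemma setOf_mem_simpleFunc_eq_biUnion (g : SimpleFunc α (Set β)) :
    {p : α × β | p.2 ∈ g p.1} = ⋃ t ∈ g.range, (g ⁻¹' {t}) ×ˢ t := by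
  ext ⟨x, y⟩
  simp only [Set.mem_ofPred_eq, Set.mem_iUnion, Set.mem_prod, Set.mem_preimage,
    Set.mem_singleton_iff, SimpleFunc.mem_range, Set.mem_range, exists_prop]
  exact ⟨fun h => ⟨_, ⟨x, rfl⟩, rfl, h⟩, fun ⟨_, _, hx, h⟩ => hx ▸ h⟩

lemma pairwiseDisjoint_fiber_prod (g : SimpleFunc α (Set β)) :
    Set.PairwiseDisjoint (↑g.range) fun t => (g ⁻¹' {t}) ×ˢ t :=
  fun _ _ _ _ hne => Set.disjoint_prod.2 <| Or.inl <| (Set.disjoint_singleton.2 hne).preimage g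

variable [MeasurableSpace β]

lemma measurableSet_of_mem_range {g : SimpleFunc α (Set β)} (hg : ∀ x, MeasurableSet (g x))
    {t : Set β} (ht : t ∈ g.range) : MeasurableSet t := by
  obtain ⟨x, rfl⟩ := SimpleFunc.mem_range.1 ht
  exact hg x

lemma measurableSet_of_mem_stripSets {S : Set (α × β)} (hS : S ∈ stripSets α β) :
    MeasurableSet S := by
  obtain ⟨g, hg, rfl⟩ := hS
  rw [setOf_mem_simpleFunc_eq_biUnion]
  exact g.range.measurableSet_biUnion fun t ht =>
    (g.measurableSet_fiber t).prod (measurableSet_of_mem_range hg ht)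

lemma isSetRing_stripSets : IsSetRing (stripSets α β) where
  empty_mem := ⟨SimpleFunc.const α ∅, fun _ => MeasurableSet.empty, by simp⟩
  union_mem := by
    rintro _ _ ⟨g, hg, rfl⟩ ⟨h, hh, rfl⟩
    exact ⟨(g.pair h).map fun p : Set β × Set β => p.1 ∪ p.2, fun x => (hg x).union (hh x),
      by ext; simp⟩
  sdiff_mem := by
    rintro _ _ ⟨g, hg, rfl⟩ ⟨h, hh, rfl⟩
    exact ⟨(g.pair h).map fun p : Set β × Set β => p.1 \ p.2, fun x => (hg x).diff (hh x),
      by ext; simp⟩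

lemma univ_mem_stripSets : Set.univ ∈ stripSets α β :=
  ⟨SimpleFunc.const α Set.univ, fun _ => MeasurableSet.univ, by simp⟩

lemma generateFrom_stripSets :
    MeasurableSpace.generateFrom (stripSets α β) = Prod.instMeasurableSpace := by
  refine le_antisymm (MeasurableSpace.generateFrom_le fun _ => measurableSet_of_mem_stripSets) ?_
  rw [← generateFrom_prod]
  refine MeasurableSpace.generateFrom_le ?_
  rintro _ ⟨A, hA, B, hB, rfl⟩
  refine MeasurableSpace.measurableSet_generateFrom
    ⟨SimpleFunc.piecewise A hA (.const α B) (.const α ∅), fun x => ?_, ?_⟩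
  · rw [SimpleFunc.piecewise_apply]
    split_ifs
    exacts [hB, .empty]
  · ext ⟨x, y⟩
    by_cases hx : x ∈ A <;> simp [SimpleFunc.piecewise_apply, hx]

end StripSets

section PairBound

variable {Ω : Type*} {𝔊 ℌ : MeasurableSpace Ω} [mΩ : MeasurableSpace Ω] (P : Measure Ω)
  [IsProbabilityMeasure P] {α β : Type*} [MeasurableSpace α] [MeasurableSpace β]
  {ξ : Ω → α} {η : Ω → β}

lemma abs_measureReal_map_sub_prod_le_of_mem_stripSets (h𝔊 : 𝔊 ≤ mΩ) (hℌ : ℌ ≤ mΩ)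
    (hξ : Measurable[𝔊] ξ) (hη : Measurable[ℌ] η) {S : Set (α × β)} (hS : S ∈ stripSets α β) :
    |(P.map fun ω => (ξ ω, η ω)).real S - ((P.map ξ).prod (P.map η)).real S|
      ≤ phiDep P 𝔊 ℌ := by
  obtain ⟨g, hg, rfl⟩ := hS
  have hξm : Measurable ξ := hξ.mono h𝔊 le_rfl
  have hηm : Measurable η := hη.mono hℌ le_rfl
  have hvals : ∀ t ∈ g.range, MeasurableSet t := fun _ => measurableSet_of_mem_range hg
  have hpiece : ∀ t ∈ g.range, MeasurableSet ((g ⁻¹' {t}) ×ˢ t) := fun t ht =>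
    (g.measurableSet_fiber t).prod (hvals t ht)
  have hbases : ∑ t ∈ g.range, P.real (ξ ⁻¹' (g ⁻¹' {t})) ≤ 1 := by
    rw [← measureReal_biUnion_finset
      (fun _ _ _ _ hne => ((Set.disjoint_singleton.2 hne).preimage g).preimage ξ)
      fun t _ => hξm (g.measurableSet_fiber t)]
    exact measureReal_le_one
  rw [setOf_mem_simpleFunc_eq_biUnion, measureReal_biUnion_finset (pairwiseDisjoint_fiber_prod g)
    hpiece, measureReal_biUnion_finset (pairwiseDisjoint_fiber_prod g) hpiece,
    ← Finset.sum_sub_distrib]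
  refine (Finset.abs_sum_le_sum_abs _ _).trans <| (Finset.sum_le_sum
    (g := fun t => phiDep P 𝔊 ℌ * P.real (ξ ⁻¹' (g ⁻¹' {t}))) fun t ht => ?_).trans <| by
      rw [← Finset.mul_sum]
      exact mul_le_of_le_one_right (phiDep_nonneg P) hbases
  rw [measureReal_prod_prod, map_measureReal_apply (hξm.prodMk hηm) (hpiece t ht),
    Set.mk_preimage_prod, map_measureReal_apply hξm (g.measurableSet_fiber t),
    map_measureReal_apply hηm (hvals t ht)]
  exact abs_measureReal_inter_sub_mul_le P (hξ (g.measurableSet_fiber t)) (hη (hvals t ht))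

theorem tvLe_map_prodMk (h𝔊 : 𝔊 ≤ mΩ) (hℌ : ℌ ≤ mΩ) (hξ : Measurable[𝔊] ξ)
    (hη : Measurable[ℌ] η) :
    TVLe (P.map fun ω => (ξ ω, η ω)) ((P.map ξ).prod (P.map η)) (phiDep P 𝔊 ℌ) := by
  have hξm : Measurable ξ := hξ.mono h𝔊 le_rfl
  have hηm : Measurable η := hη.mono hℌ le_rfl
  set μ₁ := P.map fun ω => (ξ ω, η ω)
  set μ₂ := (P.map ξ).prod (P.map η)
  have : IsProbabilityMeasure μ₁ := Measure.isProbabilityMeasure_map (hξm.prodMk hηm).aemeasurable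
  have : IsProbabilityMeasure (P.map ξ) := Measure.isProbabilityMeasure_map hξm.aemeasurable
  have : IsProbabilityMeasure (P.map η) := Measure.isProbabilityMeasure_map hηm.aemeasurable
  intro S hS
  refine le_of_forall_pos_le_add fun ε hε => ?_
  obtain ⟨T, hT, hTS⟩ := exists_measure_symmDiff_lt_of_generateFrom_isSetRing (μ := μ₁ + μ₂)
    isSetRing_stripSets ⟨{Set.univ}, Set.countable_singleton _, by simpa using univ_mem_stripSets,
      by simp⟩ generateFrom_stripSets.symm hS (ENNReal.ofReal_pos.2 hε)
  have hsmall : μ₁.real (T ∆ S) + μ₂.real (T ∆ S) < ε := by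
    rw [← measureReal_add_apply]
    exact ENNReal.toReal_lt_of_lt_ofReal hTS
  have h₁ := abs_measureReal_sub_le_measureReal_symmDiff μ₁ T S
  have h₂ := abs_measureReal_sub_le_measureReal_symmDiff μ₂ T S
  have hT' := abs_measureReal_map_sub_prod_le_of_mem_stripSets P h𝔊 hℌ hξ hη hT
  rw [abs_le] at h₁ h₂ hT' ⊢
  constructor <;> linarith

end PairBound

section Peeling

variable {Ω : Type*} [MeasurableSpace Ω] (P : Measure Ω) [IsProbabilityMeasure P]

noncomputable def phiDepTail {ι : Type*} [LT ι] {E : ι → Type*} [∀ i, MeasurableSpace (E i)]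
    (W : ∀ i, Ω → E i) (i : ι) : ℝ :=
  phiDep P (MeasurableSpace.comap (W i) inferInstance)
    (⨆ (j) (_ : i < j), MeasurableSpace.comap (W j) inferInstance)

lemma phiDepTail_comp_le {ι κ : Type*} [Preorder ι] [Preorder κ] {E : ι → Type*}
    [∀ i, MeasurableSpace (E i)] (W : ∀ i, Ω → E i) {f : κ → ι} (hf : StrictMono f) (k : κ) :
    phiDepTail P (fun k => W (f k)) k ≤ phiDepTail P W (f k) :=
  phiDep_mono P le_rfl <| iSup₂_le fun k' hk' =>
    le_iSup₂ (f := fun j (_ : f k < j) => MeasurableSpace.comap (W j) inferInstance) (f k') (hf hk')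

theorem tvLe_map_pi_fin {n : ℕ} {E : Fin n → Type*} [∀ i, MeasurableSpace (E i)]
    (W : ∀ i, Ω → E i) (hW : ∀ i, Measurable (W i)) :
    TVLe (P.map fun ω i => W i ω) (Measure.pi fun i => P.map (W i)) (∑ i, phiDepTail P W i) := by
  induction n with
  | zero =>
    have := Measure.isProbabilityMeasure_map (μ := P) (measurable_pi_lambda _ hW).aemeasurable
    have : ∀ i : Fin 0, IsProbabilityMeasure (P.map (W i)) := fun i => i.elim0
    rw [Finset.univ_eq_empty, Finset.sum_empty]
    exact TVLe.of_subsingleton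
  | succ n ih =>
    have : IsProbabilityMeasure (P.map (W 0)) :=
      Measure.isProbabilityMeasure_map (hW 0).aemeasurable
    have hη : Measurable[⨆ (j) (_ : 0 < j), MeasurableSpace.comap (W j) inferInstance]
        fun ω (j : Fin n) => W j.succ ω :=
      @measurable_pi_lambda Ω (Fin n) (fun j => E j.succ)
        (⨆ (j) (_ : 0 < j), MeasurableSpace.comap (W j) inferInstance) _ _ fun j =>
        (comap_measurable (W j.succ)).mono (le_iSup₂
          (f := fun j (_ : 0 < j) => MeasurableSpace.comap (W j) inferInstance) j.succ j.succ_pos)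
          le_rfl
    have hpair := tvLe_map_prodMk P (hW 0).comap_le (iSup₂_le fun j _ => (hW j).comap_le)
      (comap_measurable (W 0)) hη
    have htail := (ih (fun j => W j.succ) (fun j => hW _)).prod_left (P.map (W 0))
    refine TVLe.of_map_measurableEquiv (MeasurableEquiv.piFinSuccAbove E 0) ?_
    rw [Measure.map_map (MeasurableEquiv.measurable _) (measurable_pi_lambda _ hW),
      (measurePreserving_piFinSuccAbove _ 0).map_eq, Fin.sum_univ_succ]
    exact (hpair.trans htail).mono (add_le_add le_rfl (Finset.sum_le_sum fun j _ =>
      phiDepTail_comp_le P W (Fin.strictMono_succ) j))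

end Peeling

def piSplitFibers {ι κ : Type*} {E : ι → Type*} [∀ i, MeasurableSpace (E i)] (a : ι → κ) :
    (∀ i, E i) ≃ᵐ ∀ j, ∀ i : {i // a i = j}, E i :=
  (MeasurableEquiv.piCongrLeft E (Equiv.sigmaFiberEquiv a)).symm.trans
    (MeasurableEquiv.piCurry fun j (i : {i // a i = j}) => E i)

lemma measurePreserving_piSplitFibers {ι κ : Type*} [Fintype ι] [Fintype κ] [DecidableEq κ]
    {E : ι → Type*} [∀ i, MeasurableSpace (E i)] (a : ι → κ) (μ : ∀ i, Measure (E i))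
    [∀ i, IsProbabilityMeasure (μ i)] :
    MeasurePreserving (piSplitFibers a) (Measure.pi μ)
      (Measure.pi fun j => Measure.pi fun i : {i // a i = j} => μ i) := by
  have hcurry : MeasurePreserving (MeasurableEquiv.piCurry fun j (i : {i // a i = j}) => E i)
      (Measure.pi fun p : Σ j, {i // a i = j} => μ p.2)
      (Measure.pi fun j => Measure.pi fun i : {i // a i = j} => μ i) := by
    refine ⟨MeasurableEquiv.measurable _, ?_⟩
    simp only [← Measure.infinitePi_eq_pi]
    exact Measure.infinitePi_map_piCurry fun j (i : {i // a i = j}) => μ i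
  exact hcurry.comp (measurePreserving_piCongrLeft μ (Equiv.sigmaFiberEquiv a)).symm

section Blocks

variable {Ω : Type*} [MeasurableSpace Ω] (P : Measure Ω) [IsProbabilityMeasure P]
  {ι : Type*} [Fintype ι] [LinearOrder ι] {E : ι → Type*} [∀ i, MeasurableSpace (E i)]
  {W : ∀ i, Ω → E i}

theorem tvLe_map_pi (hW : ∀ i, Measurable (W i)) :
    TVLe (P.map fun ω i => W i ω) (Measure.pi fun i => P.map (W i)) (∑ i, phiDepTail P W i) := by
  have : ∀ i, IsProbabilityMeasure (P.map (W i)) := fun i =>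
    Measure.isProbabilityMeasure_map (hW i).aemeasurable
  let e := Fintype.orderIsoFinOfCardEq ι rfl
  let φ := MeasurableEquiv.piCongrLeft E e.toEquiv
  have hlaw : (P.map fun ω k => W (e.toEquiv k) ω).map φ = P.map fun ω i => W i ω := by
    rw [Measure.map_map φ.measurable (measurable_pi_lambda _ fun k => hW _)]
    congr 1
    funext ω i
    obtain ⟨k, rfl⟩ := e.toEquiv.surjective i
    exact Equiv.piCongrLeft_apply_apply (P := E) e.toEquiv (fun k => W (e.toEquiv k) ω) k
  have hpi := (measurePreserving_piCongrLeft (fun i => P.map (W i)) e.toEquiv).map_eq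
  rw [← hlaw, ← hpi, ← e.toEquiv.sum_comp]
  exact ((tvLe_map_pi_fin P _ fun k => hW _).mono (Finset.sum_le_sum fun k _ =>
    phiDepTail_comp_le P W e.strictMono k)).map φ.measurable

theorem tvLe_map_pi_of_iIndepFun_blocks {s : ℕ} (a : ι → Fin s) (hW : ∀ i, Measurable (W i))
    {Ω' : Type*} [MeasurableSpace Ω'] (P' : Measure Ω') [IsProbabilityMeasure P']
    {W' : ∀ i, Ω' → E i} (hW' : ∀ i, Measurable (W' i))
    (hlaw : ∀ j, P'.map (fun ω' (i : {i // a i = j}) => W' i ω')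
      = P.map fun ω (i : {i // a i = j}) => W i ω)
    (hindep : iIndepFun (fun j ω' (i : {i // a i = j}) => W' i ω') P') :
    TVLe (P'.map fun ω' i => W' i ω') (Measure.pi fun i => P.map (W i))
      (∑ i, phiDepTail P W i) := by
  have : ∀ i, IsProbabilityMeasure (P.map (W i)) := fun i =>
    Measure.isProbabilityMeasure_map (hW i).aemeasurable
  have : ∀ j, IsProbabilityMeasure (P.map fun ω (i : {i // a i = j}) => W i ω) := fun j =>
    Measure.isProbabilityMeasure_map
      (measurable_pi_lambda (fun ω (i : {i // a i = j}) => W i ω) fun i => hW i).aemeasurable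
  have hblocks : (P'.map fun ω' i => W' i ω').map (piSplitFibers a)
      = Measure.pi fun j => P.map fun ω (i : {i // a i = j}) => W i ω := by
    rw [Measure.map_map (MeasurableEquiv.measurable _) (measurable_pi_lambda _ hW'),
      show (piSplitFibers a ∘ fun ω' i => W' i ω') = fun ω' j (i : {i // a i = j}) => W' i ω'
        from rfl, (iIndepFun_iff_map_fun_eq_pi_map fun j => (measurable_pi_lambda
          (fun ω' (i : {i // a i = j}) => W' i ω') fun i => hW' i).aemeasurable).1 hindep]
    exact congrArg Measure.pi (funext hlaw)
  refine TVLe.of_map_measurableEquiv (piSplitFibers a) ?_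
  rw [hblocks, (measurePreserving_piSplitFibers a _).map_eq, ← Fintype.sum_fiberwise a]
  exact TVLe.pi fun j => (tvLe_map_pi P (W := fun i : {i // a i = j} => W i) fun i => hW i).mono
    (Finset.sum_le_sum fun i _ => phiDepTail_comp_le P W (Subtype.strictMono_coe _) i)

end Blocks

lemma phiDepTail_le_mixPhi {Ω : Type*} [MeasurableSpace Ω] (P : Measure Ω)
    [IsProbabilityMeasure P] (F : ℤ → ℤ → MeasurableSpace Ω)
    (hFmono : ∀ n m n₁ m₁ : ℤ, n₁ ≤ n → n ≤ m → m ≤ m₁ → F n m ≤ F n₁ m₁)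
    {k₀ : ℕ} {E : Fin k₀ → Type*} [∀ i, MeasurableSpace (E i)] {U : ∀ i, Ω → E i}
    {m n : Fin k₀ → ℤ} (hmn : ∀ i, m i ≤ n i) (horder : ∀ i j, i < j → n i < m j)
    (hUmeas : ∀ i, Measurable[F (m i) (n i)] (U i)) (i : Fin k₀) :
    phiDepTail P U i
      ≤ if h : (i : ℕ) + 1 < k₀ then mixPhi P F ((m ⟨(i : ℕ) + 1, h⟩ - n i).toNat) else 0 := by
  split_ifs with h
  · set i' : Fin k₀ := ⟨(i : ℕ) + 1, h⟩
    have hii' : i < i' := Fin.lt_def.2 (Nat.lt_succ_self _)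
    refine (phiDep_mono P ?_ ?_).trans (phiDep_le_mixPhi P F (horder i i' hii').le)
    · exact (hUmeas i).comap_le.trans
        (le_iSup (fun j : {j : ℤ // j ≤ n i} => F j.1 (n i)) ⟨m i, hmn i⟩)
    · refine iSup₂_le fun j hij => ?_
      have hmj : m i' ≤ m j := by
        rcases (show i' ≤ j from hij).eq_or_lt with rfl | hlt
        exacts [le_rfl, (hmn i').trans (horder i' j hlt).le]
      exact (hUmeas j).comap_le.trans <| (hFmono _ _ _ _ hmj (hmn j) le_rfl).trans <|
        le_iSup (fun m' : {m' : ℤ // m i' ≤ m'} => F (m i') m'.1) ⟨n j, hmj.trans (hmn j)⟩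
  · have hlast : (⨆ (j) (_ : i < j), MeasurableSpace.comap (U j) inferInstance) = ⊥ := by
      refine iSup₂_eq_bot.2 fun j hij => absurd ?_ h
      have := j.isLt
      have : (i : ℕ) < j := hij
      omega
    rw [phiDepTail, hlast, phiDep_bot_right]

/-- if `U i` is `F (m i) (n i)`-measurable with ordered, separated index intervals,
`a : Fin k₀ → Fin s` assigns each index to a block of a partition, and `U'` consists of mutually
independent copies of the blocks `(U i)_{a i = j}`, then for every bounded Borel `H`,
`|E[H(U₁,…,U_{k₀})] − E[H(U'₁,…,U'_{k₀})]| ≤ 4 sup|H| ∑_{i=2}^{k₀} φ(m_i − n_{i−1})`. -/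
theorem statement1
    {Ω : Type*} [MeasurableSpace Ω] (P : Measure Ω) [IsProbabilityMeasure P]
    {𝓧 : Type*} [MeasurableSpace 𝓧]
    (F : ℤ → ℤ → MeasurableSpace Ω)
    (hFsub : ∀ n m : ℤ, F n m ≤ ‹MeasurableSpace Ω›)
    (hFmono : ∀ n m n₁ m₁ : ℤ, n₁ ≤ n → n ≤ m → m ≤ m₁ → F n m ≤ F n₁ m₁)
    (k₀ s : ℕ) (d : Fin k₀ → ℕ)
    (U : (i : Fin k₀) → Ω → (Fin (d i) → 𝓧))
    (m n : Fin k₀ → ℤ)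
    (hmn : ∀ i, m i ≤ n i)
    (horder : ∀ i j : Fin k₀, i < j → n i < m j)
    (hUmeas : ∀ i, Measurable[F (m i) (n i)] (U i))
    (a : Fin k₀ → Fin s)
    {Ω' : Type*} [MeasurableSpace Ω'] (P' : Measure Ω') [IsProbabilityMeasure P']
    (U' : (i : Fin k₀) → Ω' → (Fin (d i) → 𝓧))
    (hU'meas : ∀ i, Measurable (U' i))
    (hlaw : ∀ j : Fin s,
      Measure.map (fun ω' => fun i : {i : Fin k₀ // a i = j} => U' i.1 ω') P'
        = Measure.map (fun ω => fun i : {i : Fin k₀ // a i = j} => U i.1 ω) P)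
    (hindep : iIndepFun
      (fun j : Fin s => fun ω' => fun i : {i : Fin k₀ // a i = j} => U' i.1 ω') P')
    (H : ((i : Fin k₀) → Fin (d i) → 𝓧) → ℝ) (hHmeas : Measurable H)
    (M : ℝ) (hHbdd : ∀ x, |H x| ≤ M) :
    |(∫ ω, H (fun i => U i ω) ∂P) - ∫ ω', H (fun i => U' i ω') ∂P'|
      ≤ 4 * (⨆ x, |H x|) * ∑ i : Fin k₀,
          (if h : (i : ℕ) + 1 < k₀ then mixPhi P F ((m ⟨(i : ℕ) + 1, h⟩ - n i).toNat) else 0) := by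
  have hU : ∀ i, Measurable (U i) := fun i => (hUmeas i).mono (hFsub _ _) le_rfl
  have hU_vec := measurable_pi_lambda _ hU
  have hU'_vec := measurable_pi_lambda _ hU'meas
  have : IsProbabilityMeasure (P.map fun ω i => U i ω) :=
    Measure.isProbabilityMeasure_map hU_vec.aemeasurable
  have : IsProbabilityMeasure (P'.map fun ω' i => U' i ω') :=
    Measure.isProbabilityMeasure_map hU'_vec.aemeasurable
  have hterms := Finset.sum_le_sum fun i (_ : i ∈ Finset.univ) =>
    phiDepTail_le_mixPhi P F hFmono hmn horder hUmeas i
  have hμ := (tvLe_map_pi P hU).mono hterms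
  have hμ' := (tvLe_map_pi_of_iIndepFun_blocks P a hU P' hU'meas hlaw hindep).mono hterms
  have hHsup : ∀ x, |H x| ≤ ⨆ x, |H x| := fun x =>
    le_ciSup ⟨M, by rintro _ ⟨y, rfl⟩; exact hHbdd y⟩ x
  rw [← integral_map hU_vec.aemeasurable hHmeas.aestronglyMeasurable,
    ← integral_map hU'_vec.aemeasurable hHmeas.aestronglyMeasurable]
  refine ((hμ.trans hμ'.symm).abs_integral_sub_le hHmeas
    (Real.iSup_nonneg fun x => abs_nonneg (H x)) hHsup).trans_eq ?_
  ring
end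

section
/- Let μ be a probability measure on a measurable space X, let ℓ ≥ 2, and let α₁,...,α_ℓ be measurable subsets of X with 0 < μ(α_j) < 1 for every j. Suppose t ∈ ℝ and β : X^{ℓ−1} → [0,2π) is a measurable function such that e^{i t ∏_{j=1}^ℓ 1_{α_j}(x_j)} = e^{i β(x₁,...,x_{ℓ−1})} for μ^ℓ-almost every (x₁,...,x_ℓ). Then t ∈ 2πℤ; in particular, the function G(x₁,...,x_ℓ) = ∏_{j=1}^ℓ 1_{α_j}(x_j) satisfies the lattice condition: for every t ∈ [−π,π]\{0} there is no such β. -/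
/-!
Since `β` does not see the last coordinate, replacing the last coordinate of a sample of `μ^ℓ`
by an independent sample of `μ` again gives a sample of `μ^ℓ`, so for almost every such pair
both points satisfy the identity. Take the first point in the box `∏ α_j` (positive measure)
and the new coordinate outside `α_ℓ` (positive measure): the product `∏ 1_{α_j}` is `1` at the
first point and `0` at the second, while `β` is the same at both, hence `e^{it} = e^{iβ} = 1`.
-/

open MeasureTheory ProbabilityTheory Filter
open scoped ENNReal NNReal

/-- The statement that for the given `t` there is no function `β` of the first `ℓ − 1`
variables, with values in `[0,2π)`, such that `e^{itG(x)} = e^{iβ(x₁,…,x_{ℓ−1})}` μ^ℓ-a.e. -/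
def NoBeta {𝓧 : Type*} [MeasurableSpace 𝓧] (ℓ : ℕ) (G : (Fin ℓ → 𝓧) → ℝ)
    (μ : Measure 𝓧) (t : ℝ) : Prop :=
  ¬ ∃ β : (Fin ℓ → 𝓧) → ℝ, Measurable β ∧ (∀ x, β x ∈ Set.Ico 0 (2 * Real.pi)) ∧
      (∀ x y : Fin ℓ → 𝓧, (∀ i : Fin ℓ, (i : ℕ) + 1 < ℓ → x i = y i) → β x = β y) ∧
      ∀ᵐ x ∂(Measure.pi fun _ : Fin ℓ => μ),
        Complex.exp (Complex.I * Complex.ofReal (t * G x))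
          = Complex.exp (Complex.I * Complex.ofReal (β x))

open Function Set

theorem exists_int_eq_two_pi_mul_of_cexp_eq_one {t : ℝ} (h : Complex.exp (Complex.I * t) = 1) :
    ∃ z : ℤ, t = 2 * Real.pi * z := by
  obtain ⟨z, hz⟩ := Complex.exp_eq_one_iff.1 h
  refine ⟨z, Complex.ofReal_injective ?_⟩
  have := mul_left_cancel₀ Complex.I_ne_zero (hz.trans (by ring) :
    Complex.I * t = Complex.I * (2 * Real.pi * z))
  exact_mod_cast this

theorem eq_zero_of_mem_Icc_of_eq_two_pi_mul {t : ℝ} (ht : t ∈ Icc (-Real.pi) Real.pi) {z : ℤ}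
    (hz : t = 2 * Real.pi * z) : t = 0 := by
  have hpi := Real.pi_pos
  have hz1 : (z : ℝ) < 1 := by nlinarith [ht.2]
  have hz2 : (-1 : ℝ) < z := by nlinarith [ht.1]
  have : z = 0 := by
    have : z < 1 := by exact_mod_cast hz1
    have : -1 < z := by exact_mod_cast hz2
    omega
  simp [hz, this]

theorem preimage_update_univ_pi {ι : Type*} [DecidableEq ι] {X : ι → Type*} (i : ι)
    (s : ∀ j, Set (X j)) :
    (fun p : (∀ j, X j) × X i => update p.1 i p.2) ⁻¹' pi univ s
      = pi univ (update s i univ) ×ˢ s i := by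
  ext ⟨x, c⟩
  simp only [mem_preimage, mem_prod, update_mem_pi_iff, mem_univ, true_implies, and_congr_left_iff]
  intro _
  simp only [Set.mem_pi, Set.mem_sdiff, mem_univ, true_and, mem_singleton_iff]
  refine forall_congr' fun j => ?_
  rcases eq_or_ne j i with rfl | hj <;> simp [*]

section UpdatePi

variable {ι : Type*} [Fintype ι] [DecidableEq ι] {X : ι → Type*} [∀ i, MeasurableSpace (X i)]

theorem measurePreserving_update (μ : ∀ i, Measure (X i)) [∀ i, SigmaFinite (μ i)] (i : ι)
    [IsProbabilityMeasure (μ i)] :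
    MeasurePreserving (fun p : (∀ j, X j) × X i => update p.1 i p.2)
      ((Measure.pi μ).prod (μ i)) (Measure.pi μ) := by
  refine ⟨measurable_update', (Measure.pi_eq fun s hs => ?_).symm⟩
  rw [Measure.map_apply measurable_update' (.univ_pi hs), preimage_update_univ_pi,
    Measure.prod_prod, Measure.pi_pi, ← Finset.prod_erase_mul _ _ (Finset.mem_univ i),
    ← Finset.prod_erase_mul _ _ (Finset.mem_univ i), update_self, measure_univ, mul_one]
  congr 1
  exact Finset.prod_congr rfl fun j hj => by rw [update_of_ne (Finset.ne_of_mem_erase hj)]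

theorem exists_mem_update_mem_of_ae (μ : ∀ i, Measure (X i)) [∀ i, SigmaFinite (μ i)] (i : ι)
    [IsProbabilityMeasure (μ i)] {p : (∀ j, X j) → Prop} (hp : ∀ᵐ x ∂Measure.pi μ, p x)
    {s : Set (∀ j, X j)} (hs : Measure.pi μ s ≠ 0) {t : Set (X i)} (ht : μ i t ≠ 0) :
    ∃ x ∈ s, ∃ c ∈ t, p x ∧ p (update x i c) := by
  have hst : (Measure.pi μ).prod (μ i) (s ×ˢ t) ≠ 0 := by
    rw [Measure.prod_prod]; exact mul_ne_zero hs ht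
  have hpp : ∀ᵐ q ∂(Measure.pi μ).prod (μ i), p q.1 ∧ p (update q.1 i q.2) :=
    (Measure.quasiMeasurePreserving_fst.ae hp).and
      ((measurePreserving_update μ i).quasiMeasurePreserving.ae hp)
  obtain ⟨⟨x, c⟩, ⟨hx, hc⟩, hpx⟩ := Measure.exists_mem_of_measure_ne_zero_of_ae hst
    (ae_restrict_of_ae hpp)
  exact ⟨x, hx, c, hc, hpx⟩

theorem exists_int_eq_two_pi_mul_of_ae_cexp_indicator_prod_eq (μ : ∀ i, Measure (X i))
    [∀ i, SigmaFinite (μ i)] (i : ι) [IsProbabilityMeasure (μ i)] (α : ∀ j, Set (X j))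
    (hα : ∀ j, μ j (α j) ≠ 0) (hαc : μ i (α i)ᶜ ≠ 0) (t : ℝ) (β : (∀ j, X j) → ℝ)
    (hβ : ∀ x c, β (update x i c) = β x)
    (heq : ∀ᵐ x ∂Measure.pi μ,
      Complex.exp (Complex.I *
          Complex.ofReal (t * ∏ j, (α j).indicator (fun _ => (1 : ℝ)) (x j)))
        = Complex.exp (Complex.I * Complex.ofReal (β x))) :
    ∃ z : ℤ, t = 2 * Real.pi * z := by
  have hA : Measure.pi μ (pi univ α) ≠ 0 := by
    rw [Measure.pi_pi]; exact Finset.prod_ne_zero_iff.2 fun j _ => hα j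
  obtain ⟨x, hx, c, hc, hex, hexc⟩ := exists_mem_update_mem_of_ae μ i heq hA hαc
  have hprod_x : ∏ j, (α j).indicator (fun _ => (1 : ℝ)) (x j) = 1 :=
    Finset.prod_eq_one fun j _ => indicator_of_mem (hx j (mem_univ j)) _
  have hprod_xc : ∏ j, (α j).indicator (fun _ => (1 : ℝ)) (update x i c j) = 0 :=
    Finset.prod_eq_zero (Finset.mem_univ i) (by simpa using hc)
  apply exists_int_eq_two_pi_mul_of_cexp_eq_one
  rw [hprod_xc, hβ, mul_zero, Complex.ofReal_zero, mul_zero, Complex.exp_zero] at hexc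
  rwa [hprod_x, mul_one, ← hexc] at hex

end UpdatePi

theorem exists_int_eq_two_pi_mul_of_ae_cexp_indicator_prod_eq_fin {𝓧 : Type*}
    [MeasurableSpace 𝓧] (μ : Measure 𝓧) [IsProbabilityMeasure μ] (ℓ : ℕ) (hℓ : 0 < ℓ)
    (α : Fin ℓ → Set 𝓧) (hα0 : ∀ j, 0 < μ (α j)) (hα1 : ∀ j, μ (α j) < 1)
    (t : ℝ) (β : (Fin ℓ → 𝓧) → ℝ)
    (hβdep : ∀ x y : Fin ℓ → 𝓧, (∀ i : Fin ℓ, (i : ℕ) + 1 < ℓ → x i = y i) → β x = β y)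
    (heq : ∀ᵐ x ∂(Measure.pi fun _ : Fin ℓ => μ),
      Complex.exp (Complex.I *
          Complex.ofReal (t * ∏ j, (α j).indicator (fun _ => (1 : ℝ)) (x j)))
        = Complex.exp (Complex.I * Complex.ofReal (β x))) :
    ∃ z : ℤ, t = 2 * Real.pi * z := by
  let last : Fin ℓ := ⟨ℓ - 1, by omega⟩
  have hαc : μ (α last)ᶜ ≠ 0 := fun h => (hα1 last).not_ge <| by
    simpa [h] using measure_univ_le_add_compl (μ := μ) (α last)
  have hβ (x : Fin ℓ → 𝓧) (c : 𝓧) : β (update x last c) = β x :=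
    hβdep _ _ fun j hj => update_of_ne (fun h => by simp [h, last] at hj; omega) _ _
  exact exists_int_eq_two_pi_mul_of_ae_cexp_indicator_prod_eq (fun _ => μ) last α
    (fun j => (hα0 j).ne') hαc t β hβ heq

theorem statement6_general
    {𝓧 : Type*} [MeasurableSpace 𝓧] (μ : Measure 𝓧) [IsProbabilityMeasure μ]
    (ℓ : ℕ) (hℓ : 2 ≤ ℓ) (α : Fin ℓ → Set 𝓧)
    (hα0 : ∀ j, 0 < μ (α j)) (hα1 : ∀ j, μ (α j) < 1)
    (t : ℝ) (β : (Fin ℓ → 𝓧) → ℝ)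
    (hβdep : ∀ x y : Fin ℓ → 𝓧, (∀ i : Fin ℓ, (i : ℕ) + 1 < ℓ → x i = y i) → β x = β y)
    (heq : ∀ᵐ x ∂(Measure.pi fun _ : Fin ℓ => μ),
      Complex.exp (Complex.I *
          Complex.ofReal (t * ∏ j, (α j).indicator (fun _ => (1 : ℝ)) (x j)))
        = Complex.exp (Complex.I * Complex.ofReal (β x))) :
    (∃ z : ℤ, t = 2 * Real.pi * z) ∧
    (∀ t' : ℝ, t' ∈ Set.Icc (-Real.pi) Real.pi → t' ≠ 0 →
      NoBeta ℓ (fun x => ∏ j, (α j).indicator (fun _ => (1 : ℝ)) (x j)) μ t') := by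
  have key := exists_int_eq_two_pi_mul_of_ae_cexp_indicator_prod_eq_fin μ ℓ (by omega) α hα0 hα1
  refine ⟨key t β hβdep heq, fun t' ht' ht'0 ⟨β', _, _, hβ'dep, heq'⟩ => ht'0 ?_⟩
  obtain ⟨z, hz⟩ := key t' β' hβ'dep heq'
  exact eq_zero_of_mem_Icc_of_eq_two_pi_mul ht' hz

/-- if `e^{it∏ 1_{α_j}(x_j)} = e^{iβ(x₁,…,x_{ℓ−1})}` μ^ℓ-a.e. for sets with
`0 < μ(α_j) < 1`, then `t ∈ 2πℤ`; in particular `G = ∏ 1_{α_j}` satisfies the lattice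
condition: for every `t ∈ [−π,π] \ {0}` there is no such `β`. -/
theorem statement6
    {𝓧 : Type*} [MeasurableSpace 𝓧] (μ : Measure 𝓧) [IsProbabilityMeasure μ]
    (ℓ : ℕ) (hℓ : 2 ≤ ℓ) (α : Fin ℓ → Set 𝓧) (hαmeas : ∀ j, MeasurableSet (α j))
    (hα0 : ∀ j, 0 < μ (α j)) (hα1 : ∀ j, μ (α j) < 1)
    (t : ℝ) (β : (Fin ℓ → 𝓧) → ℝ) (hβmeas : Measurable β)
    (hβrange : ∀ x, β x ∈ Set.Ico 0 (2 * Real.pi))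
    (hβdep : ∀ x y : Fin ℓ → 𝓧, (∀ i : Fin ℓ, (i : ℕ) + 1 < ℓ → x i = y i) → β x = β y)
    (heq : ∀ᵐ x ∂(Measure.pi fun _ : Fin ℓ => μ),
      Complex.exp (Complex.I *
          Complex.ofReal (t * ∏ j, (α j).indicator (fun _ => (1 : ℝ)) (x j)))
        = Complex.exp (Complex.I * Complex.ofReal (β x))) :
    (∃ z : ℤ, t = 2 * Real.pi * z) ∧
    (∀ t' : ℝ, t' ∈ Set.Icc (-Real.pi) Real.pi → t' ≠ 0 →
      NoBeta ℓ (fun x => ∏ j, (α j).indicator (fun _ => (1 : ℝ)) (x j)) μ t') :=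
  statement6_general μ ℓ hℓ α hα0 hα1 t β hβdep heq
end

section
/- There exist δ₀, a ∈ (0,1) such that for every sufficiently large N ∈ ℕ, q_i(N) + δ₀N ≤ q_{i+1}(⌊aN⌋) − δ₀N for all i = 1,2,...,ℓ−1. -/
open MeasureTheory ProbabilityTheory Filter
open scoped ENNReal NNReal

private lemma growth_aux (f : ℕ → ℕ) (α : ℝ) (hα : 0 < α) (n₀ : ℕ)
    (h : ∀ n, n₀ ≤ n → (n : ℝ) ^ α ≤ (f (n + 1) : ℝ) - f n) :
    ∀ n, n₀ ≤ n → ∀ m, n ≤ m →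
      ((m : ℝ) - n) * (n : ℝ) ^ α ≤ (f m : ℝ) - f n := by
  intro n hn m hm
  induction m, hm using Nat.le_induction with
  | base => simp
  | succ m hm ih =>
    have h1 := h m (hn.trans hm)
    have h2 : (n : ℝ) ^ α ≤ (m : ℝ) ^ α :=
      Real.rpow_le_rpow (by positivity) (by exact_mod_cast hm) hα.le
    push_cast
    nlinarith [Real.rpow_nonneg (show (0:ℝ) ≤ (n:ℝ) by positivity) α]

/-- there exist `δ₀, a ∈ (0,1)` such that for all sufficiently large `N`,
`q_i(N) + δ₀N ≤ q_{i+1}(⌊aN⌋) − δ₀N` for `i = 1,…,ℓ−1`. -/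
theorem statement9
    (ℓ k : ℕ) (hkℓ : k < ℓ) (q : Fin ℓ → ℕ → ℕ)
    (α : ℝ) (hα : α ∈ Set.Ioo (0 : ℝ) 1)
    (hq1 : ∀ j : Fin ℓ, k ≤ (j : ℕ) → ∀ᶠ n : ℕ in atTop,
      (n : ℝ) ^ α ≤ (q j (n + 1) : ℝ) - (q j n : ℝ))
    (hq2 : ∀ ε : ℝ, 0 < ε → ∀ i : Fin ℓ, k ≤ (i : ℕ) → ∀ h : (i : ℕ) + 1 < ℓ,
      Tendsto (fun n : ℕ => (q ⟨(i : ℕ) + 1, h⟩ ⌊ε * (n : ℝ)⌋₊ : ℤ) - (q i n : ℤ))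
        atTop atTop)
    (hq3 : ∀ j : Fin ℓ, (j : ℕ) < k → ∀ n : ℕ, q j n = ((j : ℕ) + 1) * n)
 :
    ∃ δ₀ ∈ Set.Ioo (0 : ℝ) 1, ∃ a ∈ Set.Ioo (0 : ℝ) 1, ∀ᶠ N : ℕ in atTop,
      ∀ (i : ℕ) (h : i + 1 < ℓ),
        (q ⟨i, Nat.lt_of_succ_lt h⟩ N : ℝ) + δ₀ * N
          ≤ (q ⟨i + 1, h⟩ ⌊a * (N : ℝ)⌋₊ : ℝ) - δ₀ * N := by
  have hℓpos : 0 < ℓ := lt_of_le_of_lt (Nat.zero_le k) hkℓ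
  have hL : (1 : ℝ) ≤ (ℓ : ℝ) := Nat.one_le_cast.mpr hℓpos
  have hLpos : (0 : ℝ) < (ℓ : ℝ) := lt_of_lt_of_le one_pos hL
  set a : ℝ := 1 - 1 / (2 * (ℓ : ℝ)) with hadef
  have hbpos : (0 : ℝ) < 1 / (2 * (ℓ : ℝ)) := by positivity
  have hbhalf : 1 / (2 * (ℓ : ℝ)) ≤ 1 / 2 := by
    rw [div_le_div_iff₀ (by positivity) (by norm_num)]
    nlinarith
  have hahalf : (1 : ℝ) / 2 ≤ a := by rw [hadef]; linarith
  have ha0 : (0 : ℝ) < a := lt_of_lt_of_le (by norm_num) hahalf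
  have ha1 : a < 1 := by rw [hadef]; linarith
  refine ⟨1/8, ⟨by norm_num, by norm_num⟩, a, ⟨ha0, ha1⟩, ?_⟩
  set ε : ℝ := a / 2 with hεdef
  have hε0 : 0 < ε := by positivity
  have hεa : ε ≤ a := by rw [hεdef]; linarith
  clear_value ε a
  have key : ∀ i : Fin ℓ, ∀ᶠ N : ℕ in atTop, ∀ h : (i : ℕ) + 1 < ℓ,
      (q ⟨(i : ℕ), Nat.lt_of_succ_lt h⟩ N : ℝ) + (1/8) * N
        ≤ (q ⟨(i : ℕ) + 1, h⟩ ⌊a * (N : ℝ)⌋₊ : ℝ) - (1/8) * N := by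
    intro i
    by_cases hi : (i : ℕ) + 1 < ℓ
    swap
    · filter_upwards with N h; exact absurd h hi
    set j : Fin ℓ := ⟨(i : ℕ) + 1, hi⟩ with hjdef
    by_cases hik : (i : ℕ) + 1 < k
    · -- Case A: both linear
      have hqi := hq3 i (Nat.lt_of_succ_lt hik)
      have hqj : ∀ n : ℕ, q j n = ((i : ℕ) + 2) * n := by
        intro n; rw [hq3 j hik n]
      filter_upwards [eventually_ge_atTop (4 * ℓ + 8)] with N hN h
      have hN' : (4 * (ℓ:ℝ) + 8 : ℝ) ≤ (N : ℝ) := by exact_mod_cast hN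
      have hN0 : (0 : ℝ) ≤ (N : ℝ) := Nat.cast_nonneg N
      have hfl : (1 - 1 / (2 * (ℓ : ℝ))) * (N : ℝ) - 1 ≤ (⌊a * (N : ℝ)⌋₊ : ℝ) := by
        rw [← hadef]; exact (Nat.sub_one_lt_floor _).le
      have hiL : ((i : ℕ) : ℝ) + 2 ≤ (ℓ : ℝ) := by exact_mod_cast hi
      have hi0 : (0 : ℝ) ≤ ((i : ℕ) : ℝ) := Nat.cast_nonneg _
      have hba : (((i : ℕ) : ℝ) + 2) * (1 / (2 * (ℓ:ℝ))) ≤ 1 / 2 := by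
        have h1 : (((i : ℕ) : ℝ) + 2) * (1 / (2 * (ℓ:ℝ)))
            ≤ (ℓ:ℝ) * (1 / (2 * (ℓ:ℝ))) :=
          mul_le_mul_of_nonneg_right hiL hbpos.le
        have h2 : (ℓ:ℝ) * (1 / (2 * (ℓ:ℝ))) = 1 / 2 := by
          field_simp
        linarith
      show (q i N : ℝ) + (1/8) * N ≤ (q j ⌊a * (N : ℝ)⌋₊ : ℝ) - (1/8) * N
      rw [hqi N, hqj]
      push_cast
      nlinarith [mul_nonneg (show (0:ℝ) ≤ ((i : ℕ) : ℝ) + 2 by linarith)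
          (sub_nonneg.2 hfl),
        mul_nonneg hN0 (sub_nonneg.2 hba)]
    · -- Case B/C : k ≤ i+1
      have hkj : k ≤ (j : ℕ) := by
        simp only [hjdef]; omega
      obtain ⟨n₀, hn₀⟩ := eventually_atTop.1 (hq1 j hkj)
      have hrt : Tendsto (fun n : ℕ => (n : ℝ) ^ α) atTop atTop :=
        (tendsto_rpow_atTop hα.1).comp tendsto_natCast_atTop_atTop
      obtain ⟨n₁, hn₁⟩ := eventually_atTop.1
        (hrt.eventually_ge_atTop (8 * ((ℓ:ℝ) + 1)))
      set n₂ := max n₀ n₁ with hn₂def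
      have hεN : Tendsto (fun N : ℕ => ε * (N : ℝ)) atTop atTop :=
        (tendsto_natCast_atTop_atTop (R := ℝ)).const_mul_atTop hε0
      have E4 : ∀ᶠ N : ℕ in atTop,
          (q i N : ℝ) ≤ (q j ⌊ε * (N : ℝ)⌋₊ : ℝ) + (ℓ:ℝ) * N := by
        by_cases hki : k ≤ (i : ℕ)
        · have h2 := (hq2 ε hε0 i hki hi).eventually_ge_atTop 0
          filter_upwards [h2] with N hN
          have hN0 : (0 : ℝ) ≤ (N : ℝ) := Nat.cast_nonneg N
          have h4 : (q i N : ℤ) ≤ (q ⟨(i : ℕ) + 1, hi⟩ ⌊ε * (N : ℝ)⌋₊ : ℤ) := by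
            linarith
          have h3 : (q i N : ℝ) ≤ (q j ⌊ε * (N : ℝ)⌋₊ : ℝ) := by exact_mod_cast h4
          nlinarith
        · -- i < k, so k = i+1 and q i is linear
          have hik' : (i : ℕ) < k := Nat.lt_of_not_le hki
          have hqi := hq3 i hik'
          filter_upwards with N
          rw [hqi N]
          have hN0 : (0 : ℝ) ≤ (N : ℝ) := Nat.cast_nonneg N
          have hiL : ((i : ℕ) : ℝ) + 1 ≤ (ℓ:ℝ) := by exact_mod_cast hi.le
          have hq0 : (0 : ℝ) ≤ (q j ⌊ε * (N : ℝ)⌋₊ : ℝ) := Nat.cast_nonneg _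
          push_cast
          nlinarith
      filter_upwards [hεN.eventually_ge_atTop (n₂ : ℝ), eventually_ge_atTop 8, E4]
        with N hNε hN8 hN4 h
      have hN0 : (0 : ℝ) ≤ (N : ℝ) := Nat.cast_nonneg N
      have hN8' : (8 : ℝ) ≤ (N : ℝ) := by exact_mod_cast hN8
      have hflε : n₂ ≤ ⌊ε * (N : ℝ)⌋₊ := Nat.le_floor hNε
      have hmm : ⌊ε * (N : ℝ)⌋₊ ≤ ⌊a * (N : ℝ)⌋₊ :=
        Nat.floor_le_floor (mul_le_mul_of_nonneg_right hεa hN0)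
      have G := growth_aux (q j) α hα.1 n₀ hn₀ ⌊ε * (N : ℝ)⌋₊
        (le_trans (le_max_left _ _) hflε) ⌊a * (N : ℝ)⌋₊ hmm
      have hpow : 8 * ((ℓ:ℝ) + 1) ≤ (⌊ε * (N : ℝ)⌋₊ : ℝ) ^ α :=
        hn₁ _ (le_trans (le_max_right _ _) hflε)
      have hfla : a * (N : ℝ) - 1 ≤ (⌊a * (N : ℝ)⌋₊ : ℝ) :=
        (Nat.sub_one_lt_floor _).le
      have hflε2 : (⌊ε * (N : ℝ)⌋₊ : ℝ) ≤ a * N / 2 := by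
        have h1 : (⌊ε * (N : ℝ)⌋₊ : ℝ) ≤ ε * N := Nat.floor_le (by positivity)
        have h2 : ε * (N : ℝ) = a * N / 2 := by rw [hεdef]; ring
        linarith
      have haN : (1/2) * (N : ℝ) ≤ a * N :=
        mul_le_mul_of_nonneg_right hahalf hN0
      have hdiff : (N : ℝ) / 8 ≤ (⌊a * (N : ℝ)⌋₊ : ℝ) - ⌊ε * (N : ℝ)⌋₊ := by
        linarith
      have hmul : (N : ℝ) / 8 * (8 * ((ℓ:ℝ) + 1))
          ≤ ((⌊a * (N : ℝ)⌋₊ : ℝ) - ⌊ε * (N : ℝ)⌋₊) * (⌊ε * (N : ℝ)⌋₊ : ℝ) ^ α :=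
        mul_le_mul hdiff hpow (by positivity) (le_trans (by positivity) hdiff)
      have hring : (N : ℝ) / 8 * (8 * ((ℓ:ℝ) + 1)) = (ℓ:ℝ) * N + N := by ring
      show (q i N : ℝ) + (1/8) * N ≤ (q j ⌊a * (N : ℝ)⌋₊ : ℝ) - (1/8) * N
      linarith [hmul, G, hN4, hN0, hring.ge, hring.le]
  have key' := eventually_all.2 key
  filter_upwards [key'] with N hN i h
  exact hN ⟨i, Nat.lt_of_succ_lt h⟩ h
end

section
/- For N ∈ ℕ and r ≥ 1, let G_N = (V_N, E_N) be the graph with vertex set V_N = {1,...,N} and an edge (n,m) whenever ρ(n,m) ≤ r, where ρ(n,m) = min{ |q_i(n) − q_j(m)| : 1 ≤ i,j ≤ ℓ }. Then there exists a constant A₀ > 0 depending only on q₁,...,q_ℓ such that every ball of radius 1 in G_N contains at most A₀ r vertices; consequently there is a constant A₁ > 0 such that every ball of radius 3 in G_N contains at most A₁ r³ vertices. -/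
open MeasureTheory ProbabilityTheory Filter
open scoped ENNReal NNReal

/-- The graph `G_N` on `V_N = {1,…,N}` with an edge `(n,m)` whenever `n ≠ m` and
`ρ(n,m) = min{|q_i(n) − q_j(m)| : 1 ≤ i,j ≤ ℓ} ≤ r`. -/
def qGraph (ℓ : ℕ) (q : Fin ℓ → ℕ → ℕ) (N r : ℕ) : SimpleGraph ℕ where
  Adj n m := n ≠ m ∧ n ∈ Finset.Icc 1 N ∧ m ∈ Finset.Icc 1 N ∧
    ∃ i j : Fin ℓ, ((q i n : ℤ) - (q j m : ℤ)).natAbs ≤ r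
  symm := by
    constructor
    rintro n m ⟨h1, h2, h3, i, j, h4⟩
    exact ⟨Ne.symm h1, h3, h2, j, i, by rw [← Int.natAbs_neg, neg_sub]; exact h4⟩
  loopless := ⟨fun n h => h.1 rfl⟩

/-!
Every `q j` is eventually strictly increasing: for `j ≥ k` because its increments are at least
`n ^ α > 0`, and for `j < k` because it is `n ↦ (j + 1) n`. Hence, past a threshold `n₀`, the
preimage under `q j` of an integer interval of length `2r` has at most `2r + 1` points, plus at most
`n₀` points below the threshold. A neighbour `m` of `n` satisfies `|q j m - q i n| ≤ r` for some
`i, j`, so the closed unit ball has at most `A₀ r` vertices, and a ball of radius `d` at most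
`(A₀ r) ^ d`.
-/

open Set

theorem StrictMonoOn.encard_setOf_natAbs_sub_le {f : ℕ → ℕ} {n₀ : ℕ} (hf : StrictMonoOn f (Ici n₀))
    (c : ℤ) (r : ℕ) : {m | ((f m : ℤ) - c).natAbs ≤ r}.encard ≤ (n₀ + (2 * r + 1) : ℕ) := by
  set S := {m | ((f m : ℤ) - c).natAbs ≤ r}
  have hsplit : S ⊆ {m | m < n₀} ∪ (S ∩ Ici n₀) := fun m hm => by
    by_cases h : m < n₀
    · exact Or.inl h
    · exact Or.inr ⟨hm, not_lt.1 h⟩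
  have htail : (S ∩ Ici n₀).encard ≤ 2 * r + 1 := by
    calc (S ∩ Ici n₀).encard ≤ (Icc (c - r) (c + r)).encard :=
          encard_le_encard_of_injOn (f := fun m => (f m : ℤ))
            (fun m hm => by
              have : ((f m : ℤ) - c).natAbs ≤ r := hm.1
              simp only [mem_Icc]; omega)
            (Nat.cast_injective.comp_injOn (hf.injOn.mono inter_subset_right))
      _ = 2 * r + 1 := by
          rw [← Finset.coe_Icc, encard_coe_eq_coe_finsetCard, Int.card_Icc]
          norm_cast; omega
  calc S.encard ≤ ({m | m < n₀} ∪ (S ∩ Ici n₀)).encard := encard_le_encard hsplit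
    _ ≤ {m | m < n₀}.encard + (S ∩ Ici n₀).encard := encard_union_le _ _
    _ ≤ (n₀ + (2 * r + 1) : ℕ) := by rw [Nat.encard_range]; push_cast; gcongr

theorem eventually_lt_add_one_of_rpow_le_sub {f : ℕ → ℕ} {α : ℝ}
    (h : ∀ᶠ n : ℕ in atTop, (n : ℝ) ^ α ≤ (f (n + 1) : ℝ) - (f n : ℝ)) :
    ∀ᶠ n in atTop, f n < f (n + 1) := by
  filter_upwards [h, eventually_gt_atTop 0] with n hn hpos
  have := Real.rpow_pos_of_pos (Nat.cast_pos.2 hpos) α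
  exact_mod_cast (by linarith : (f n : ℝ) < f (n + 1))

theorem exists_forall_strictMonoOn_Ici {ℓ k : ℕ} {q : Fin ℓ → ℕ → ℕ} {α : ℝ}
    (hq1 : ∀ j : Fin ℓ, k ≤ (j : ℕ) → ∀ᶠ n : ℕ in atTop,
      (n : ℝ) ^ α ≤ (q j (n + 1) : ℝ) - (q j n : ℝ))
    (hq3 : ∀ j : Fin ℓ, (j : ℕ) < k → ∀ n : ℕ, q j n = ((j : ℕ) + 1) * n) :
    ∃ n₀, ∀ j, StrictMonoOn (q j) (Ici n₀) := by
  have h : ∀ᶠ n in atTop, ∀ j, q j n < q j (n + 1) := by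
    refine eventually_all.2 fun j => ?_
    by_cases hj : k ≤ (j : ℕ)
    · exact eventually_lt_add_one_of_rpow_le_sub (hq1 j hj)
    · refine Eventually.of_forall fun n => ?_
      rw [hq3 j (not_le.1 hj), hq3 j (not_le.1 hj)]
      nlinarith
  obtain ⟨n₀, hn₀⟩ := eventually_atTop.1 h
  exact ⟨n₀, fun j => strictMonoOn_of_lt_add_one ordConnected_Ici fun a _ ha _ => hn₀ a ha j⟩

theorem qGraph_encard_closedNbhd_le {ℓ : ℕ} {q : Fin ℓ → ℕ → ℕ} {n₀ : ℕ}
    (hq : ∀ j, StrictMonoOn (q j) (Ici n₀)) (N r n : ℕ) :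
    {m | m = n ∨ (qGraph ℓ q N r).Adj n m}.encard ≤ (1 + ℓ * ℓ * (n₀ + (2 * r + 1)) : ℕ) := by
  have hsub : {m | m = n ∨ (qGraph ℓ q N r).Adj n m} ⊆
      {n} ∪ ⋃ (i : Fin ℓ) (j : Fin ℓ), {m | ((q j m : ℤ) - (q i n : ℤ)).natAbs ≤ r} := by
    rintro m (rfl | ⟨-, -, -, i, j, hij⟩)
    · exact Or.inl rfl
    · refine Or.inr (mem_iUnion₂.2 ⟨i, j, ?_⟩)
      show ((q j m : ℤ) - (q i n : ℤ)).natAbs ≤ r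
      rwa [← Int.natAbs_neg, neg_sub]
  calc _ ≤ _ := encard_le_encard hsub
    _ ≤ 1 + ∑ i : Fin ℓ, ∑ j : Fin ℓ, {m | ((q j m : ℤ) - (q i n : ℤ)).natAbs ≤ r}.encard := by
        grw [encard_union_le, encard_singleton, encard_iUnion_le_of_fintype]
        gcongr
        exact encard_iUnion_le_of_fintype _
    _ ≤ 1 + ∑ _i : Fin ℓ, ∑ _j : Fin ℓ, ((n₀ + (2 * r + 1) : ℕ) : ℕ∞) := by
        gcongr with i _ j _
        exact (hq j).encard_setOf_natAbs_sub_le _ r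
    _ = _ := by
        simp only [Finset.sum_const, Finset.card_univ, Fintype.card_fin, nsmul_eq_mul]
        push_cast; ring

theorem SimpleGraph.encard_setOf_walk_length_le_le_pow {V : Type*} (G : SimpleGraph V) {B : ℕ}
    (hB : ∀ v, {w | w = v ∨ G.Adj v w}.encard ≤ B) (k : ℕ) (v : V) :
    {w | ∃ p : G.Walk v w, p.length ≤ k}.encard ≤ (B ^ k : ℕ) := by
  induction k generalizing v with
  | zero =>
    have hsub : {w | ∃ p : G.Walk v w, p.length ≤ 0} ⊆ {v} := by
      rintro w ⟨p, hp⟩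
      exact (p.eq_of_length_eq_zero (Nat.le_zero.1 hp)).symm
    exact (encard_le_encard hsub).trans (by simp)
  | succ k ih =>
    set nbhd := {w | w = v ∨ G.Adj v w}
    have hfin : nbhd.Finite := (encard_le_coe_iff_finite_ncard_le.1 (hB v)).1
    have hsub : {w | ∃ p : G.Walk v w, p.length ≤ k + 1} ⊆
        ⋃ a ∈ hfin.toFinset, {w | ∃ p : G.Walk a w, p.length ≤ k} := by
      rintro w ⟨p, hp⟩
      simp only [mem_iUnion, Finite.mem_toFinset]
      cases p with
      | nil => exact ⟨v, Or.inl rfl, .nil, Nat.zero_le _⟩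
      | cons h p => exact ⟨_, Or.inr h, p, by simpa using hp⟩
    calc _ ≤ _ := encard_le_encard hsub
      _ ≤ ∑ a ∈ hfin.toFinset, {w | ∃ p : G.Walk a w, p.length ≤ k}.encard :=
          hfin.toFinset.set_encard_biUnion_le _
      _ ≤ ∑ _a ∈ hfin.toFinset, ((B ^ k : ℕ) : ℕ∞) := Finset.sum_le_sum fun a _ => ih a
      _ ≤ ((B ^ (k + 1) : ℕ) : ℕ∞) := by
          rw [Finset.sum_const, nsmul_eq_mul, pow_succ', Nat.cast_mul]
          gcongr
          exact_mod_cast hfin.encard_eq_coe_toFinset_card ▸ hB v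

theorem statement11_general
    (ℓ k : ℕ) (q : Fin ℓ → ℕ → ℕ)
    (α : ℝ)
    (hq1 : ∀ j : Fin ℓ, k ≤ (j : ℕ) → ∀ᶠ n : ℕ in atTop,
      (n : ℝ) ^ α ≤ (q j (n + 1) : ℝ) - (q j n : ℝ))
    (hq3 : ∀ j : Fin ℓ, (j : ℕ) < k → ∀ n : ℕ, q j n = ((j : ℕ) + 1) * n)
 :
    (∃ A₀ : ℕ, 0 < A₀ ∧ ∀ N r : ℕ, 1 ≤ r → ∀ n : ℕ,
      ({m : ℕ | m = n ∨ (qGraph ℓ q N r).Adj n m}).ncard ≤ A₀ * r) ∧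
    ∃ A₁ : ℕ, 0 < A₁ ∧ ∀ N r : ℕ, 1 ≤ r → ∀ n : ℕ,
      ({m : ℕ | ∃ p : (qGraph ℓ q N r).Walk n m, p.length ≤ 3}).ncard ≤ A₁ * r ^ 3 := by
  obtain ⟨n₀, hmono⟩ := exists_forall_strictMonoOn_Ici hq1 hq3
  set A₀ := 1 + ℓ * ℓ * (n₀ + 3)
  have hball : ∀ N r, 1 ≤ r → ∀ n,
      {m | m = n ∨ (qGraph ℓ q N r).Adj n m}.encard ≤ (A₀ * r : ℕ) := by
    intro N r hr n
    refine (qGraph_encard_closedNbhd_le hmono N r n).trans ?_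
    have : ℓ * ℓ * (n₀ + 1) ≤ ℓ * ℓ * (n₀ + 1) * r := Nat.le_mul_of_pos_right _ hr
    have : 1 + ℓ * ℓ * (n₀ + (2 * r + 1)) ≤ A₀ * r := by simp only [A₀]; nlinarith
    exact_mod_cast this
  refine ⟨⟨A₀, by positivity, fun N r hr n => (encard_le_coe_iff_finite_ncard_le.1
    (hball N r hr n)).2⟩, A₀ ^ 3, by positivity, fun N r hr n => ?_⟩
  have h3 := (qGraph ℓ q N r).encard_setOf_walk_length_le_le_pow (hball N r hr) 3 n
  rw [mul_pow] at h3
  exact (encard_le_coe_iff_finite_ncard_le.1 h3).2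

/-- there is `A₀ > 0` depending only on `q₁,…,q_ℓ` such that every ball of radius
`1` in `G_N` has at most `A₀ r` vertices; consequently there is `A₁ > 0` such that every ball of
radius `3` has at most `A₁ r³` vertices. -/
theorem statement11
    (ℓ k : ℕ) (hkℓ : k < ℓ) (q : Fin ℓ → ℕ → ℕ)
    (α : ℝ) (hα : α ∈ Set.Ioo (0 : ℝ) 1)
    (hq1 : ∀ j : Fin ℓ, k ≤ (j : ℕ) → ∀ᶠ n : ℕ in atTop,
      (n : ℝ) ^ α ≤ (q j (n + 1) : ℝ) - (q j n : ℝ))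
    (hq2 : ∀ ε : ℝ, 0 < ε → ∀ i : Fin ℓ, k ≤ (i : ℕ) → ∀ h : (i : ℕ) + 1 < ℓ,
      Tendsto (fun n : ℕ => (q ⟨(i : ℕ) + 1, h⟩ ⌊ε * (n : ℝ)⌋₊ : ℤ) - (q i n : ℤ))
        atTop atTop)
    (hq3 : ∀ j : Fin ℓ, (j : ℕ) < k → ∀ n : ℕ, q j n = ((j : ℕ) + 1) * n)
 :
    (∃ A₀ : ℕ, 0 < A₀ ∧ ∀ N r : ℕ, 1 ≤ r → ∀ n : ℕ,
      ({m : ℕ | m = n ∨ (qGraph ℓ q N r).Adj n m}).ncard ≤ A₀ * r) ∧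
    ∃ A₁ : ℕ, 0 < A₁ ∧ ∀ N r : ℕ, 1 ≤ r → ∀ n : ℕ,
      ({m : ℕ | ∃ p : (qGraph ℓ q N r).Walk n m, p.length ≤ 3}).ncard ≤ A₁ * r ^ 3 :=
  statement11_general ℓ k q α hq1 hq3
end
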